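/- arXiv:1712.05288 — 7 statements merged into one kernel-verified Lean document; each statement's English description precedes it below -/
import Mathlib

section
/- Let k be a field of characteristic different from 2 and 3, and let L be a simple Lie algebra over k with a 5-grading L = ⊕_{j=−2}^{2} L_j such that L ≠ L_0. Let L = ⊕_{i=−r}^{s} L_{[i]} be a second ℤ-grading on L such that ⊕_{i=−r}^{−1} L_{[i]} is generated as a Lie algebra by L_{[−1]} ≠ 0. Assume the second grading is preserved by the grading torus of the first grading, in the sense that for every t ∈ k^×, the k-linear automorphism of L acting as multiplication by t^j on L_j (for −2 ≤ j ≤ 2) maps each subspace L_{[i]} into itself. Then L_{[−1]} is not contained in L_0. -/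
/-!
Suppose `M (-1) ⊆ L₀`. Since `M (-1)` generates the negative part of the second grading and `L₀` is
a subalgebra, every `M i` with `i < 0` lies in `L₀`, where the torus element `θ` for `t = 2` (acting
on `L_j` by `2 ^ j`) is the identity. As `θ` preserves each `M i`, the `M`-components of an
eigenvector of `θ` are eigenvectors for the same eigenvalue; for `x ∈ L_j`, `j ≠ 0`, the eigenvalue
`2 ^ j` is not `1`, so the negative components of `x` vanish. Thus every `L_j` with `j ≠ 0` lies
in the subalgebra `⊕_{i ≥ 0} M i`. The subalgebra generated by these `L_j` is an ideal, nonzero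
because `L ≠ L₀`, hence all of `L` by simplicity, contradicting `M (-1) ≠ 0`.
-/

open DirectSum

theorem two_zpow_ne_one {k : Type*} [Field k] (h3 : (3 : k) ≠ 0) {j : ℤ}
    (hj0 : j ≠ 0) (hj : |j| ≤ 2) : (2 : k) ^ j ≠ 1 := by
  have two_ne_one : (2 : k) ≠ 1 := fun h => one_ne_zero (by linear_combination h)
  have four_ne_one : (4 : k) ≠ 1 := fun h => h3 (by linear_combination h)
  obtain ⟨hlo, hhi⟩ := abs_le.mp hj
  obtain rfl | rfl | rfl | rfl : j = -2 ∨ j = -1 ∨ j = 1 ∨ j = 2 := by omega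
  all_goals norm_num [zpow_neg, two_ne_one, four_ne_one]

section Graded

variable {ι k V : Type*} [DecidableEq ι] [CommRing k] [AddCommGroup V] [Module k V]

theorem DirectSum.IsInternal.biSup_ne_top {M : ι → Submodule k V} (h : IsInternal M) {S : Set ι}
    {i : ι} (hi : i ∉ S) (hMi : M i ≠ ⊥) : ⨆ j ∈ S, M j ≠ ⊤ := fun htop =>
  hMi ((h.submodule_iSupIndep.disjoint_biSup hi).eq_bot_of_le (htop ▸ le_top))

variable (M : ι → Submodule k V) [Decomposition M]

theorem decompose_map_of_mapsTo {φ : V →ₗ[k] V} (hφ : ∀ i, ∀ x ∈ M i, φ x ∈ M i)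
    (x : V) (i : ι) : (decompose M (φ x) i : V) = φ (decompose M x i) := by
  induction x using Decomposition.inductionOn M with
  | zero => simp
  | @homogeneous j y =>
    rw [decompose_coe, decompose_of_mem M (hφ j y y.2)]
    by_cases h : j = i
    · subst h; simp
    · simp [of_eq_of_ne _ _ _ (Ne.symm h)]
  | add y z hy hz => simp [decompose_add, hy, hz]

theorem mem_biSup_of_apply_eq_smul [IsDomain k] [Module.IsTorsionFree k V] {φ : V →ₗ[k] V}
    (hφ : ∀ i, ∀ x ∈ M i, φ x ∈ M i) {S : Set ι} (hfix : ∀ i ∉ S, ∀ y ∈ M i, φ y = y)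
    {μ : k} (hμ : μ ≠ 1) {x : V} (hx : φ x = μ • x) : x ∈ ⨆ i ∈ S, M i := by
  classical
  rw [← sum_support_decompose M x]
  refine Submodule.sum_mem _ fun i _ => ?_
  by_cases hi : i ∈ S
  · exact Submodule.mem_iSup_of_mem i (Submodule.mem_iSup_of_mem hi (decompose M x i).2)
  · have heigen : φ (decompose M x i) = μ • (decompose M x i : V) := by
      rw [← decompose_map_of_mapsTo M hφ, hx, decompose_smul]; rfl
    have hzero : (μ - 1) • (decompose M x i : V) = 0 := by
      rw [sub_smul, one_smul, ← heigen, hfix i hi _ (decompose M x i).2, sub_self]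
    rw [(smul_eq_zero_iff_right (sub_ne_zero.mpr hμ)).mp hzero]
    exact Submodule.zero_mem _

theorem sum_decompose_eq_self {s : Finset ι} (hs : ∀ i ∉ s, M i = ⊥) (x : V) :
    ∑ i ∈ s, (decompose M x i : V) = x := by
  classical
  conv_rhs => rw [← sum_support_decompose M x]
  refine (Finset.sum_subset (fun i hi => ?_) fun i _ hi => ?_).symm
  · by_contra hs'
    have := (hs i hs').le (decompose M x i).2
    rw [Submodule.mem_bot] at this
    exact DFinsupp.mem_support_iff.mp hi (Subtype.ext this)
  · rw [DFinsupp.notMem_support_iff.mp hi]; rfl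

def gradingScale (w : ι → k) : V →ₗ[k] V :=
  (decomposeLinearEquiv M).symm.toLinearMap ∘ₗ lmap (fun i => w i • LinearMap.id) ∘ₗ
    (decomposeLinearEquiv M).toLinearMap

theorem gradingScale_of_mem (w : ι → k) {i : ι} {x : V} (hx : x ∈ M i) :
    gradingScale M w x = w i • x := by
  simp [gradingScale, decomposeLinearEquiv_apply, decomposeLinearEquiv_symm_apply,
    decompose_of_mem M hx, decompose_symm_of]

theorem gradingScale_mem {s : Finset ι} (hs : ∀ i ∉ s, M i = ⊥) {w : ι → k} {N : Submodule k V}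
    (hN : ∀ y : ι → V, (∀ i, y i ∈ M i) → ∑ i ∈ s, y i ∈ N → ∑ i ∈ s, w i • y i ∈ N)
    {x : V} (hx : x ∈ N) : gradingScale M w x ∈ N := by
  have hsum := sum_decompose_eq_self M hs x
  rw [← hsum] at hx
  rw [← hsum, map_sum]
  simp only [gradingScale_of_mem M w (decompose M x _).2]
  exact hN _ (fun i => (decompose M x i).2) hx

end Graded

section Lie

variable {ι R L : Type*} [CommRing R] [LieRing L] [LieAlgebra R L]

theorem LieSubalgebra.lie_mem_lieSpan_of_forall_lie_mem {s : Set L} {x : L}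
    (hs : ∀ y ∈ s, ⁅x, y⁆ ∈ lieSpan R L s) {y : L} (hy : y ∈ lieSpan R L s) :
    ⁅x, y⁆ ∈ lieSpan R L s := by
  induction hy using lieSpan_induction with
  | mem y hy => exact hs y hy
  | zero => simp
  | add y z _ _ hy hz => rw [lie_add]; exact add_mem hy hz
  | smul a y _ hy => rw [lie_smul]; exact SMulMemClass.smul_mem a hy
  | lie y z hy' hz' hy hz =>
    rw [leibniz_lie]; exact add_mem (lie_mem _ hy hz') (lie_mem _ hy' hz)

variable (M : ι → Submodule R L)

def gradedLieSubalgebra [Add ι] (hM : ∀ i j, ∀ x ∈ M i, ∀ y ∈ M j, ⁅x, y⁆ ∈ M (i + j))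
    (S : Set ι) (hS : ∀ i ∈ S, ∀ j ∈ S, i + j ∈ S) : LieSubalgebra R L :=
  { ⨆ i ∈ S, M i with
    lie_mem' := fun {x y} hx hy => by
      have hle : Submodule.map₂ (LieModule.toEnd R L L : L →ₗ[R] Module.End R L)
          (⨆ i ∈ S, M i) (⨆ j ∈ S, M j) ≤ ⨆ i ∈ S, M i := by
        simp only [Submodule.map₂_iSup_left, Submodule.map₂_iSup_right]
        refine iSup₂_le fun j hj => iSup₂_le fun i hi => Submodule.map₂_le.mpr fun a ha b hb => ?_
        exact Submodule.mem_iSup_of_mem (i + j) <|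
          Submodule.mem_iSup_of_mem (hS i hi j hj) (hM i j a ha b hb)
      exact hle (Submodule.apply_mem_map₂ _ hx hy) }

theorem lie_mem_lieSpan_nonzero_degree [AddZeroClass ι]
    (hM : ∀ i j, ∀ x ∈ M i, ∀ y ∈ M j, ⁅x, y⁆ ∈ M (i + j)) (hspan : ⨆ i, M i = ⊤) (x : L) {y : L}
    (hy : y ∈ LieSubalgebra.lieSpan R L (⋃ (j) (_ : j ≠ 0), (M j : Set L))) :
    ⁅x, y⁆ ∈ LieSubalgebra.lieSpan R L (⋃ (j) (_ : j ≠ 0), (M j : Set L)) := by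
  have hx : x ∈ ⨆ i, M i := hspan ▸ Submodule.mem_top
  induction hx using Submodule.iSup_induction' with
  | mem i x hx =>
    by_cases hi : i = 0
    · subst hi
      refine LieSubalgebra.lie_mem_lieSpan_of_forall_lie_mem (fun z hz => ?_) hy
      obtain ⟨j, hj, hz⟩ := Set.mem_iUnion₂.mp hz
      exact LieSubalgebra.subset_lieSpan
        (Set.mem_iUnion₂.mpr ⟨j, hj, by simpa using hM 0 j x hx z hz⟩)
    · exact LieSubalgebra.lie_mem _ (LieSubalgebra.subset_lieSpan
        (Set.mem_iUnion₂.mpr ⟨i, hi, hx⟩)) hy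
  | zero => simp
  | add x x' _ _ hx hx' => rw [add_lie]; exact add_mem hx hx'

theorem LieSubalgebra.eq_top_of_forall_ne_zero_le [AddZeroClass ι] [LieAlgebra.IsSimple R L]
    (hM : ∀ i j, ∀ x ∈ M i, ∀ y ∈ M j, ⁅x, y⁆ ∈ M (i + j)) (hspan : ⨆ i, M i = ⊤)
    (h0 : M 0 ≠ ⊤) {K : LieSubalgebra R L} (hK : ∀ j ≠ 0, M j ≤ K.toSubmodule) : K = ⊤ := by
  set Q := lieSpan R L (⋃ (j) (_ : j ≠ 0), (M j : Set L))
  have hMQ : ∀ j ≠ 0, M j ≤ Q.toSubmodule := fun j hj x hx =>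
    subset_lieSpan (Set.mem_iUnion₂.mpr ⟨j, hj, hx⟩)
  obtain ⟨I, hI⟩ := Q.exists_lieIdeal_coe_eq_iff.mpr fun x _ hy =>
    lie_mem_lieSpan_nonzero_degree M hM hspan x hy
  have hQ : Q = ⊤ := by
    rcases LieAlgebra.IsSimple.eq_bot_or_eq_top I with rfl | rfl
    · refine absurd (eq_top_iff.mpr (hspan ▸ iSup_le fun j => ?_)) h0
      by_cases hj : j = 0
      · rw [hj]
      · exact (hMQ j hj).trans (by simp [← hI])
    · rw [← hI]; rfl
  exact eq_top_iff.mpr (hQ.ge.trans (lieSpan_le.mpr (Set.iUnion₂_subset hK)))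

end Lie

theorem statement3_general
    (k : Type*) [Field k] (hchar2 : (2 : k) ≠ 0) (hchar3 : (3 : k) ≠ 0)
    (L : Type*) [LieRing L] [LieAlgebra k L]
    [LieAlgebra.IsSimple k L]
    (Lc : ℤ → Submodule k L)
    (hdirect : DirectSum.IsInternal Lc)
    (hbracket : ∀ i j : ℤ, ∀ x ∈ Lc i, ∀ y ∈ Lc j, ⁅x, y⁆ ∈ Lc (i + j))
    (hbound : ∀ i : ℤ, 2 < |i| → Lc i = ⊥)
    (hnontriv : Lc 0 ≠ ⊤)
    (M : ℤ → Submodule k L)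
    (hMdirect : DirectSum.IsInternal M)
    (hMbracket : ∀ i j : ℤ, ∀ x ∈ M i, ∀ y ∈ M j, ⁅x, y⁆ ∈ M (i + j))
    (hM1 : M (-1) ≠ ⊥)
    (hgen : ∀ i : ℤ, i < 0 →
      (M i : Set L) ⊆ (LieSubalgebra.lieSpan k L (M (-1) : Set L) : Set L))
    (htorus : ∀ (t : kˣ) (i : ℤ) (x : ℤ → L), (∀ j, x j ∈ Lc j) →
      (∑ j ∈ Finset.Icc (-2 : ℤ) 2, x j) ∈ M i →
      (∑ j ∈ Finset.Icc (-2 : ℤ) 2, ((t ^ j : kˣ) : k) • x j) ∈ M i) :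
    ¬ M (-1) ≤ Lc 0 := by
  intro hle
  let := hdirect.chooseDecomposition
  let := hMdirect.chooseDecomposition
  have hIcc : ∀ j ∉ Finset.Icc (-2 : ℤ) 2, Lc j = ⊥ := fun j hj =>
    hbound j (by rw [Finset.mem_Icc, ← abs_le] at hj; exact not_le.mp hj)
  have hneg : ∀ i < 0, M i ≤ Lc 0 := by
    let L₀ : LieSubalgebra k L :=
      { Lc 0 with lie_mem' := fun hx hy => by simpa using hbracket 0 0 _ hx _ hy }
    exact fun i hi x hx => LieSubalgebra.lieSpan_le (K := L₀) |>.mpr hle (hgen i hi hx)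
  set t : kˣ := Units.mk0 2 hchar2
  set θ := gradingScale Lc fun j => ((t ^ j : kˣ) : k)
  have hθM : ∀ i, ∀ x ∈ M i, θ x ∈ M i := fun i _ => gradingScale_mem Lc hIcc (htorus t i)
  have hθneg : ∀ i ∉ {i : ℤ | 0 ≤ i}, ∀ y ∈ M i, θ y = y := fun i hi y hy =>
    (gradingScale_of_mem Lc _ (hneg i (not_le.mp hi) hy)).trans (by simp)
  have hLc : ∀ j ≠ 0, Lc j ≤ ⨆ i ∈ {i : ℤ | 0 ≤ i}, M i := by
    intro j hj x hx
    by_cases hj2 : |j| ≤ 2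
    · refine mem_biSup_of_apply_eq_smul M hθM hθneg ?_ (gradingScale_of_mem Lc _ hx)
      simpa [t, Units.val_zpow_eq_zpow_val] using two_zpow_ne_one hchar3 hj hj2
    · rw [hbound j (not_le.mp hj2), Submodule.mem_bot] at hx
      rw [hx]; exact zero_mem _
  have hP := LieSubalgebra.eq_top_of_forall_ne_zero_le Lc hbracket hdirect.submodule_iSup_eq_top
    hnontriv (K := gradedLieSubalgebra M hMbracket {i | 0 ≤ i} fun i hi j hj =>
      show 0 ≤ i + j from add_nonneg hi hj) hLc
  exact hMdirect.biSup_ne_top (show (-1 : ℤ) ∉ {i : ℤ | 0 ≤ i} by simp) hM1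
    ((congrArg LieSubalgebra.toSubmodule hP).trans LieSubalgebra.top_toSubmodule)

/-- Let L be a simple 5-graded Lie algebra (L ≠ L_0) over a field of
characteristic ≠ 2, 3, and let L = ⊕_{i=-r}^{s} M i be a second ℤ-grading whose negative
part is generated as a Lie algebra by M (-1) ≠ 0.  If the grading torus of the 5-grading
preserves the second grading, then M (-1) is not contained in L_0. -/
theorem statement3
    (k : Type*) [Field k] (hchar2 : (2 : k) ≠ 0) (hchar3 : (3 : k) ≠ 0)
    (L : Type*) [LieRing L] [LieAlgebra k L]
    [LieAlgebra.IsSimple k L]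
    (Lc : ℤ → Submodule k L)
    (hdirect : DirectSum.IsInternal Lc)
    (hbracket : ∀ i j : ℤ, ∀ x ∈ Lc i, ∀ y ∈ Lc j, ⁅x, y⁆ ∈ Lc (i + j))
    (hbound : ∀ i : ℤ, 2 < |i| → Lc i = ⊥)
    (hnontriv : Lc 0 ≠ ⊤)
    (r s : ℕ)
    (M : ℤ → Submodule k L)
    (hMdirect : DirectSum.IsInternal M)
    (hMbracket : ∀ i j : ℤ, ∀ x ∈ M i, ∀ y ∈ M j, ⁅x, y⁆ ∈ M (i + j))
    (hMbound : ∀ i : ℤ, (i < -(r : ℤ) ∨ (s : ℤ) < i) → M i = ⊥)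
    (hM1 : M (-1) ≠ ⊥)
    (hgen : ∀ i : ℤ, i < 0 →
      (M i : Set L) ⊆ (LieSubalgebra.lieSpan k L (M (-1) : Set L) : Set L))
    (htorus : ∀ (t : kˣ) (i : ℤ) (x : ℤ → L), (∀ j, x j ∈ Lc j) →
      (∑ j ∈ Finset.Icc (-2 : ℤ) 2, x j) ∈ M i →
      (∑ j ∈ Finset.Icc (-2 : ℤ) 2, ((t ^ j : kˣ) : k) • x j) ∈ M i) :
    ¬ M (-1) ≤ Lc 0 :=
  statement3_general k hchar2 hchar3 L Lc hdirect hbracket hbound hnontriv M hMdirect hMbracket hM1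
    hgen htorus
end

section
/- Let R be a commutative ring in which 2, 3 and 5 are invertible, and let L be a 5-graded Lie algebra over R. Then L is algebraic: for each σ ∈ {1, −1} and all x ∈ L_σ, s ∈ L_{2σ}, the R-linear endomorphism ∑_{i=0}^{4} (1/i!)(ad(x+s))^i of L is an automorphism of L as an R-Lie algebra. -/
theorem myaux (R : Type*) [CommRing R] (L : Type*) [LieRing L] [LieAlgebra R L] (z : L)
    (c2 c3 c4 e5 : R)
    (h2c : 2 * c2 = 1) (h3c : 3 * c3 = c2) (h4c : 4 * c4 = c3) (h5c : 5 * e5 = 1)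
    (hD5 : ∀ y : L, ⁅z, ⁅z, ⁅z, ⁅z, ⁅z, y⁆⁆⁆⁆⁆ = 0) :
    ∃ f : L ≃ₗ⁅R⁆ L, ∀ a : L,
      f a = a + ⁅z, a⁆ + c2 • ⁅z, ⁅z, a⁆⁆ + c3 • ⁅z, ⁅z, ⁅z, a⁆⁆⁆
        + c4 • ⁅z, ⁅z, ⁅z, ⁅z, a⁆⁆⁆⁆ := by
  set ED : Module.End R L := LieAlgebra.ad R L z with hED
  set E : Module.End R L :=
    1 + ED + c2 • (ED * ED) + c3 • (ED * ED * ED) + c4 • (ED * ED * ED * ED) with hE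
  set E' : Module.End R L :=
    1 - ED + c2 • (ED * ED) - c3 • (ED * ED * ED) + c4 • (ED * ED * ED * ED) with hE'
  have hEa : ∀ a : L, E a = a + ⁅z, a⁆ + c2 • ⁅z, ⁅z, a⁆⁆ + c3 • ⁅z, ⁅z, ⁅z, a⁆⁆⁆
      + c4 • ⁅z, ⁅z, ⁅z, ⁅z, a⁆⁆⁆⁆ := by
    intro a
    simp [hE, hED, Module.End.mul_apply, LieAlgebra.ad_apply]
  have hE'a : ∀ a : L, E' a = a - ⁅z, a⁆ + c2 • ⁅z, ⁅z, a⁆⁆ - c3 • ⁅z, ⁅z, ⁅z, a⁆⁆⁆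
      + c4 • ⁅z, ⁅z, ⁅z, ⁅z, a⁆⁆⁆⁆ := by
    intro a
    simp [hE', hED, Module.End.mul_apply, LieAlgebra.ad_apply]
  -- Leibniz rules
  have hiter : ∀ (n : ℕ) (y : L), (⇑(LieDerivation.ad R L z))^[n] y =
      (fun w => ⁅z, w⁆)^[n] y := by
    intro n
    induction n with
    | zero => simp
    | succ n ih => intro y; rw [Function.iterate_succ_apply, Function.iterate_succ_apply, ih]; simp
  have T5 : ∀ u v : L,
      (5:ℕ) • ⁅⁅z,u⁆, ⁅z,⁅z,⁅z,⁅z,v⁆⁆⁆⁆⁆ + (10:ℕ) • ⁅⁅z,⁅z,u⁆⁆, ⁅z,⁅z,⁅z,v⁆⁆⁆⁆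
      + (10:ℕ) • ⁅⁅z,⁅z,⁅z,u⁆⁆⁆, ⁅z,⁅z,v⁆⁆⁆ + (5:ℕ) • ⁅⁅z,⁅z,⁅z,⁅z,u⁆⁆⁆⁆, ⁅z,v⁆⁆ = 0 := by
    intro u v
    have T := LieDerivation.iterate_apply_lie' (LieDerivation.ad R L z) 5 u v
    simp only [hiter] at T
    simp only [Finset.sum_range_succ, Finset.sum_range_zero, Function.iterate_succ_apply,
      Function.iterate_zero_apply, zero_add,
      show (5:ℕ).choose 0 = 1 by rfl, show (5:ℕ).choose 1 = 5 by rfl,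
      show (5:ℕ).choose 2 = 10 by rfl, show (5:ℕ).choose 3 = 10 by rfl,
      show (5:ℕ).choose 4 = 5 by rfl, show (5:ℕ).choose 5 = 1 by rfl,
      show (5:ℕ)-1 = 4 by rfl, show (5:ℕ)-2 = 3 by rfl, show (5:ℕ)-3 = 2 by rfl,
      show (5:ℕ)-4 = 1 by rfl, show (5:ℕ)-5 = 0 by rfl,
      hD5, one_smul, zero_lie, lie_zero, smul_zero, add_zero, zero_add] at T
    linear_combination (norm := module) -T
  have L2 : ∀ u v : L, ⁅z, ⁅z, ⁅u, v⁆⁆⁆ =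
      ⁅⁅z,⁅z,u⁆⁆, v⁆ + (2:ℕ) • ⁅⁅z,u⁆, ⁅z,v⁆⁆ + ⁅u, ⁅z,⁅z,v⁆⁆⁆ := by
    intro u v
    have T := LieDerivation.iterate_apply_lie' (LieDerivation.ad R L z) 2 u v
    simp only [hiter] at T
    simp only [Finset.sum_range_succ, Finset.sum_range_zero, Function.iterate_succ_apply,
      Function.iterate_zero_apply, zero_add,
      show (2:ℕ).choose 0 = 1 by rfl, show (2:ℕ).choose 1 = 2 by rfl,
      show (2:ℕ).choose 2 = 1 by rfl,
      show (2:ℕ)-1 = 1 by rfl, show (2:ℕ)-2 = 0 by rfl,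
      one_smul] at T
    linear_combination (norm := module) T
  have L3 : ∀ u v : L, ⁅z, ⁅z, ⁅z, ⁅u, v⁆⁆⁆⁆ =
      ⁅⁅z,⁅z,⁅z,u⁆⁆⁆, v⁆ + (3:ℕ) • ⁅⁅z,⁅z,u⁆⁆, ⁅z,v⁆⁆ + (3:ℕ) • ⁅⁅z,u⁆, ⁅z,⁅z,v⁆⁆⁆
      + ⁅u, ⁅z,⁅z,⁅z,v⁆⁆⁆⁆ := by
    intro u v
    have T := LieDerivation.iterate_apply_lie' (LieDerivation.ad R L z) 3 u v
    simp only [hiter] at T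
    simp only [Finset.sum_range_succ, Finset.sum_range_zero, Function.iterate_succ_apply,
      Function.iterate_zero_apply, zero_add,
      show (3:ℕ).choose 0 = 1 by rfl, show (3:ℕ).choose 1 = 3 by rfl,
      show (3:ℕ).choose 2 = 3 by rfl, show (3:ℕ).choose 3 = 1 by rfl,
      show (3:ℕ)-1 = 2 by rfl, show (3:ℕ)-2 = 1 by rfl, show (3:ℕ)-3 = 0 by rfl,
      one_smul] at T
    linear_combination (norm := module) T
  have L4 : ∀ u v : L, ⁅z, ⁅z, ⁅z, ⁅z, ⁅u, v⁆⁆⁆⁆⁆ =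
      ⁅⁅z,⁅z,⁅z,⁅z,u⁆⁆⁆⁆, v⁆ + (4:ℕ) • ⁅⁅z,⁅z,⁅z,u⁆⁆⁆, ⁅z,v⁆⁆
      + (6:ℕ) • ⁅⁅z,⁅z,u⁆⁆, ⁅z,⁅z,v⁆⁆⁆ + (4:ℕ) • ⁅⁅z,u⁆, ⁅z,⁅z,⁅z,v⁆⁆⁆⁆
      + ⁅u, ⁅z,⁅z,⁅z,⁅z,v⁆⁆⁆⁆⁆ := by
    intro u v
    have T := LieDerivation.iterate_apply_lie' (LieDerivation.ad R L z) 4 u v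
    simp only [hiter] at T
    simp only [Finset.sum_range_succ, Finset.sum_range_zero, Function.iterate_succ_apply,
      Function.iterate_zero_apply, zero_add,
      show (4:ℕ).choose 0 = 1 by rfl, show (4:ℕ).choose 1 = 4 by rfl,
      show (4:ℕ).choose 2 = 6 by rfl, show (4:ℕ).choose 3 = 4 by rfl,
      show (4:ℕ).choose 4 = 1 by rfl,
      show (4:ℕ)-1 = 3 by rfl, show (4:ℕ)-2 = 2 by rfl, show (4:ℕ)-3 = 1 by rfl,
      show (4:ℕ)-4 = 0 by rfl,
      one_smul] at T
    linear_combination (norm := module) T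
  -- clean relations
  have sub1 : ∀ a b : L, ⁅⁅z,⁅z,⁅z,⁅z,a⁆⁆⁆⁆, ⁅z,⁅z,⁅z,⁅z,b⁆⁆⁆⁆⁆ = 0 := by
    intro a b
    have T := T5 ⁅z,⁅z,a⁆⁆ ⁅z,b⁆
    simp only [hD5, zero_lie, lie_zero, smul_zero, add_zero, zero_add] at T
    linear_combination (norm := match_scalars) (c2 * e5) • T
    all_goals (first
      | ring1
      | linear_combination 5*e5*h2c + h5c
      | linear_combination (-(5*e5))*h2c - h5c
      | linear_combination 10*e5*h2c + 2*h5c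
      | linear_combination (-(10*e5))*h2c - 2*h5c
      | linear_combination h5c
      | linear_combination -h5c
      | linear_combination 2*h5c
      | linear_combination (-2)*h5c
      | linear_combination 3*c2*h5c
      | linear_combination (-(3*c2))*h5c
      | linear_combination c2*h5c
      | linear_combination -c2*h5c)
  have sub2 : ∀ a b : L, ⁅⁅z,⁅z,⁅z,⁅z,a⁆⁆⁆⁆, ⁅z,⁅z,⁅z,b⁆⁆⁆⁆ =
      -⁅⁅z,⁅z,⁅z,a⁆⁆⁆, ⁅z,⁅z,⁅z,⁅z,b⁆⁆⁆⁆⁆ := by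
    intro a b
    have T := T5 ⁅z,a⁆ ⁅z,b⁆
    simp only [hD5, zero_lie, lie_zero, smul_zero, add_zero, zero_add] at T
    linear_combination (norm := match_scalars) (c2 * e5) • T
    all_goals (first
      | ring1
      | linear_combination 5*e5*h2c + h5c
      | linear_combination (-(5*e5))*h2c - h5c
      | linear_combination 10*e5*h2c + 2*h5c
      | linear_combination (-(10*e5))*h2c - 2*h5c
      | linear_combination h5c
      | linear_combination -h5c
      | linear_combination 2*h5c
      | linear_combination (-2)*h5c
      | linear_combination 3*c2*h5c
      | linear_combination (-(3*c2))*h5c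
      | linear_combination c2*h5c
      | linear_combination -c2*h5c)
  have sub3 : ∀ a b : L, ⁅⁅z,⁅z,⁅z,⁅z,a⁆⁆⁆⁆, ⁅z,⁅z,b⁆⁆⁆ =
      ⁅⁅z,⁅z,a⁆⁆, ⁅z,⁅z,⁅z,⁅z,b⁆⁆⁆⁆⁆ := by
    intro a b
    have Ta := T5 ⁅z,a⁆ b
    have Tb := T5 a ⁅z,b⁆
    simp only [hD5, zero_lie, lie_zero, smul_zero, add_zero, zero_add] at Ta Tb
    linear_combination (norm := match_scalars) e5 • Ta - e5 • Tb
    all_goals (first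
      | ring1
      | linear_combination 5*e5*h2c + h5c
      | linear_combination (-(5*e5))*h2c - h5c
      | linear_combination 10*e5*h2c + 2*h5c
      | linear_combination (-(10*e5))*h2c - 2*h5c
      | linear_combination h5c
      | linear_combination -h5c
      | linear_combination 2*h5c
      | linear_combination (-2)*h5c
      | linear_combination 3*c2*h5c
      | linear_combination (-(3*c2))*h5c
      | linear_combination c2*h5c
      | linear_combination -c2*h5c)
  have sub4 : ∀ a b : L, ⁅⁅z,⁅z,⁅z,a⁆⁆⁆, ⁅z,⁅z,⁅z,b⁆⁆⁆⁆ =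
      (-(3*c2)) • ⁅⁅z,⁅z,a⁆⁆, ⁅z,⁅z,⁅z,⁅z,b⁆⁆⁆⁆⁆ := by
    intro a b
    have Ta := T5 ⁅z,a⁆ b
    have Tb := T5 a ⁅z,b⁆
    simp only [hD5, zero_lie, lie_zero, smul_zero, add_zero, zero_add] at Ta Tb
    linear_combination (norm := match_scalars)
      (-(c2 * e5)) • Ta + (2 * c2 * e5) • Tb
    all_goals (first
      | ring1
      | linear_combination 5*e5*h2c + h5c
      | linear_combination (-(5*e5))*h2c - h5c
      | linear_combination 10*e5*h2c + 2*h5c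
      | linear_combination (-(10*e5))*h2c - 2*h5c
      | linear_combination h5c
      | linear_combination -h5c
      | linear_combination 2*h5c
      | linear_combination (-2)*h5c
      | linear_combination 3*c2*h5c
      | linear_combination (-(3*c2))*h5c
      | linear_combination c2*h5c
      | linear_combination -c2*h5c)
  have sub5 : ∀ a b : L, ⁅⁅z,⁅z,⁅z,⁅z,a⁆⁆⁆⁆, ⁅z,b⁆⁆ =
      -⁅⁅z,a⁆, ⁅z,⁅z,⁅z,⁅z,b⁆⁆⁆⁆⁆ - (2:R) • ⁅⁅z,⁅z,a⁆⁆, ⁅z,⁅z,⁅z,b⁆⁆⁆⁆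
      - (2:R) • ⁅⁅z,⁅z,⁅z,a⁆⁆⁆, ⁅z,⁅z,b⁆⁆⁆ := by
    intro a b
    have T := T5 a b
    linear_combination (norm := match_scalars) e5 • T
    all_goals (first
      | ring1
      | linear_combination 5*e5*h2c + h5c
      | linear_combination (-(5*e5))*h2c - h5c
      | linear_combination 10*e5*h2c + 2*h5c
      | linear_combination (-(10*e5))*h2c - 2*h5c
      | linear_combination h5c
      | linear_combination -h5c
      | linear_combination 2*h5c
      | linear_combination (-2)*h5c
      | linear_combination 3*c2*h5c
      | linear_combination (-(3*c2))*h5c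
      | linear_combination c2*h5c
      | linear_combination -c2*h5c)
  have L1 : ∀ u v : L, ⁅z, ⁅u, v⁆⁆ = ⁅⁅z, u⁆, v⁆ + ⁅u, ⁅z, v⁆⁆ := fun u v => leibniz_lie z u v
  -- homomorphism property
  have hhom : ∀ a b : L, E ⁅a, b⁆ = ⁅E a, E b⁆ := by
    intro a b
    rw [hEa ⁅a, b⁆, hEa a, hEa b]
    rw [L4 a b, L3 a b, L2 a b, L1 a b]
    simp only [add_lie, lie_add, smul_lie, lie_smul, smul_add, smul_smul]
    rw [sub1 a b, sub2 a b, sub3 a b, sub4 a b, sub5 a b]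
    match_scalars
    all_goals (first
      | ring1
      | linear_combination h2c
      | linear_combination -h2c
      | linear_combination h3c
      | linear_combination -h3c
      | linear_combination h4c
      | linear_combination -h4c
      | linear_combination c2*h3c
      | linear_combination -(c2*h3c)
      | linear_combination c3*h4c
      | linear_combination (-(6*c4))*h2c + c2*h3c + 3*c2*h4c
      | linear_combination (6*c4)*h2c - c2*h3c - 3*c2*h4c
      | linear_combination 2*c4*h2c - c2*h4c
      | linear_combination (-(2*c4))*h2c + c2*h4c
      | linear_combination (-(2*c2*c4))*h2c - (c2*c3)*h3c + (c2*c2)*h4c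
      | linear_combination (2*c2*c4)*h2c + (c2*c3)*h3c - (c2*c2)*h4c)
  -- inverses
  have hinv1 : ∀ a : L, E' (E a) = a := by
    intro a
    rw [hEa a]
    simp only [map_add, map_smul, hE'a, lie_add, lie_smul, hD5, lie_zero, smul_zero, add_zero, zero_add,
      sub_zero, zero_sub, smul_neg, neg_zero]
    match_scalars
    all_goals (first
      | ring1
      | linear_combination h2c
      | linear_combination -h2c
      | linear_combination (-2*c4+2*c3)*h2c - c2*h3c + c2*h4c
      | linear_combination (2*c4-2*c3)*h2c + c2*h3c - c2*h4c)
  have hinv2 : ∀ a : L, E (E' a) = a := by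
    intro a
    rw [hE'a a]
    simp only [map_add, map_sub, map_smul, hEa, lie_add, lie_sub, lie_smul, hD5, lie_zero, smul_zero, add_zero,
      zero_add, sub_zero, zero_sub, smul_neg, neg_zero]
    match_scalars
    all_goals (first
      | ring1
      | linear_combination h2c
      | linear_combination -h2c
      | linear_combination (-2*c4+2*c3)*h2c - c2*h3c + c2*h4c
      | linear_combination (2*c4-2*c3)*h2c + c2*h3c - c2*h4c)
  refine ⟨{ toLinearMap := E, map_lie' := by intro a b; exact hhom a b,
            invFun := E', left_inv := fun a => hinv1 a, right_inv := fun a => hinv2 a }, ?_⟩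
  intro a
  exact hEa a


/-- Any 5-graded Lie algebra over a commutative ring in which 2, 3 and 5 are
invertible is algebraic. -/
theorem statement5
    (R : Type*) [CommRing R]
    (h2 : IsUnit (2 : R)) (h3 : IsUnit (3 : R)) (h5 : IsUnit (5 : R))
    (L : Type*) [LieRing L] [LieAlgebra R L]
    (Lc : ℤ → Submodule R L)
    (hdirect : DirectSum.IsInternal Lc)
    (hbracket : ∀ i j : ℤ, ∀ x ∈ Lc i, ∀ y ∈ Lc j, ⁅x, y⁆ ∈ Lc (i + j))
    (hbound : ∀ i : ℤ, 2 < |i| → Lc i = ⊥) :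
    ∀ σ : ℤ, σ = 1 ∨ σ = -1 → ∀ x ∈ Lc σ, ∀ s ∈ Lc (2 * σ),
      ∃ f : L ≃ₗ⁅R⁆ L, ∀ a : L,
        f a = (∑ i ∈ Finset.range 5,
          Ring.inverse ((i.factorial : R)) • (LieAlgebra.ad R L (x + s)) ^ i) a := by
  intro σ hσ x hx s hs
  -- Step 1: the fifth power of ad (x + s) vanishes
  have hσσ : σ * σ = 1 := by rcases hσ with h | h <;> simp [h]
  have habs : ∀ j : ℤ, |σ * j| = |j| := by
    intro j; rcases hσ with h | h <;> simp [h]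
  set S : ℤ → Submodule R L := fun t => ⨆ j, ⨆ (_ : t ≤ σ * j), Lc j with hSdef
  have hS_le : ∀ (t j : ℤ), t ≤ σ * j → Lc j ≤ S t := fun t j h =>
    le_iSup₂ (f := fun j (_ : t ≤ σ * j) => Lc j) j h
  have hstep : ∀ t : ℤ, ∀ y ∈ S t, ⁅x + s, y⁆ ∈ S (t + 1) := by
    intro t
    have hle : S t ≤ (S (t + 1)).comap ((LieAlgebra.ad R L (x + s))) := by
      refine iSup₂_le fun j hj => fun y hy => ?_
      simp only [Submodule.mem_comap, LieAlgebra.ad_apply, add_lie]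
      refine add_mem (hS_le _ _ ?_ (hbracket _ _ _ hx _ hy))
        (hS_le _ _ ?_ (hbracket _ _ _ hs _ hy))
      · have h' : σ * (σ + j) = 1 + σ * j := by linear_combination hσσ
        rw [h']; linarith
      · have h' : σ * (2 * σ + j) = 2 + σ * j := by linear_combination 2 * hσσ
        rw [h']; linarith
    intro y hy
    have := hle hy
    simpa only [Submodule.mem_comap, LieAlgebra.ad_apply] using this
  have htop : ∀ y : L, y ∈ S (-2) := by
    intro y
    have h := hdirect.submodule_iSup_eq_top
    have hle : (⊤ : Submodule R L) ≤ S (-2) := by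
      rw [← h]
      refine iSup_le fun j => ?_
      by_cases hj : 2 < |j|
      · rw [hbound j hj]; exact bot_le
      · refine hS_le _ _ ?_
        have h1 : |σ * j| ≤ 2 := by rw [habs j]; omega
        have := neg_abs_le (σ * j); omega
    exact hle trivial
  have hbot : S 3 = ⊥ := by
    refine le_bot_iff.mp (iSup₂_le fun j hj => ?_)
    have h1 : 2 < |j| := by
      rw [← habs j]; have := le_abs_self (σ * j); omega
    rw [hbound j h1]
  have hD5 : ∀ y : L, ⁅x+s, ⁅x+s, ⁅x+s, ⁅x+s, ⁅x+s, y⁆⁆⁆⁆⁆ = 0 := by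
    intro y
    have h0 := htop y
    have h1 := hstep _ _ h0
    have h2' := hstep _ _ h1
    have h3' := hstep _ _ h2'
    have h4' := hstep _ _ h3'
    have h5' := hstep _ _ h4'
    norm_num at h5'
    rw [hbot] at h5'
    simpa using h5'
  -- Step 2: scalars
  have h6u : IsUnit (6 : R) := by
    have := h2.mul h3; norm_num at this; exact this
  have h24u : IsUnit (24 : R) := by
    have := h2.mul (h2.mul (h2.mul h3)); norm_num at this; exact this
  have h2c : (2 : R) * Ring.inverse (2 : R) = 1 := Ring.mul_inverse_cancel _ h2
  have h5c : (5 : R) * Ring.inverse (5 : R) = 1 := Ring.mul_inverse_cancel _ h5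
  have h6c : (6 : R) * Ring.inverse (6 : R) = 1 := Ring.mul_inverse_cancel _ h6u
  have h24c : (24 : R) * Ring.inverse (24 : R) = 1 := Ring.mul_inverse_cancel _ h24u
  have h3c : (3 : R) * Ring.inverse (6 : R) = Ring.inverse (2 : R) := by
    linear_combination (-3 * Ring.inverse (6 : R)) * h2c + Ring.inverse (2 : R) * h6c
  have h4c : (4 : R) * Ring.inverse (24 : R) = Ring.inverse (6 : R) := by
    linear_combination (-4 * Ring.inverse (24 : R)) * h6c + Ring.inverse (6 : R) * h24c
  obtain ⟨f, hf⟩ := myaux R L (x + s) (Ring.inverse (2 : R)) (Ring.inverse (6 : R))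
    (Ring.inverse (24 : R)) (Ring.inverse (5 : R)) h2c h3c h4c h5c hD5
  refine ⟨f, fun a => ?_⟩
  rw [hf a]
  simp [Finset.sum_range_succ, Nat.factorial, pow_succ, Module.End.mul_apply]
  module
end

section
/- Let R be a commutative ring in which 2 and 3 are invertible, and let L be a 3-graded Lie algebra over R, i.e., a ℤ-graded Lie algebra with L_i = 0 for |i| > 1. Then every x ∈ L_1 ∪ L_{−1} is algebraic: the R-linear endomorphism ∑_{i=0}^{4} (1/i!)(ad x)^i = id + ad x + (1/2)(ad x)^2 of L (note (ad x)^3 = 0) is an automorphism of L as an R-Lie algebra. -/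
/-!
Since `ad x` shifts degrees by `±1` and `L` is concentrated in degrees `-1, 0, 1`, `(ad x)^3 = 0`,
so the sum is `exp D = 1 + D + D²/2` for the derivation `D = ad x`. Applying `D³ = 0` to `⁅a, b⁆`
and expanding by Leibniz gives `3 (⁅D²a, Db⁆ + ⁅Da, D²b⁆) = 0`; with `3` invertible this is
exactly the cancellation that makes `exp D` preserve brackets, and `exp (-D)` is its inverse
because `2` is invertible.
-/

open Finset

section TruncatedExp

variable (R : Type*) {A : Type*} [CommRing R] [Ring A] [Algebra R A]

noncomputable def truncatedExp (f : A) : A := 1 + f + Ring.inverse (2 : R) • f ^ 2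

variable {R}

theorem sum_range_five_inverse_factorial_smul_pow {f : A} (hf : f ^ 3 = 0) :
    ∑ i ∈ range 5, Ring.inverse (i.factorial : R) • f ^ i = truncatedExp R f := by
  have hf4 : f ^ 4 = 0 := by rw [pow_succ, hf, zero_mul]
  simp [sum_range_succ, hf, hf4, truncatedExp, Nat.factorial]

theorem truncatedExp_mul_truncatedExp_neg (h2 : IsUnit (2 : R)) {f : A} (hf : f ^ 3 = 0) :
    truncatedExp R f * truncatedExp R (-f) = 1 := by
  have hc : Ring.inverse (2 : R) * 2 = 1 := Ring.inverse_mul_cancel _ h2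
  have h12 : f * f ^ 2 = 0 := by rw [← pow_succ', hf]
  have h21 : f ^ 2 * f = 0 := by rw [← pow_succ, hf]
  have h22 : f ^ 2 * f ^ 2 = 0 := by rw [← pow_add, pow_succ, hf, zero_mul]
  simp only [truncatedExp, neg_sq, add_mul, mul_add, mul_neg, one_mul, mul_one,
    smul_mul_assoc, mul_smul_comm, h12, h21, h22, smul_zero, ← sq]
  match_scalars
  · ring
  · ring
  · linear_combination hc

theorem truncatedExp_neg_mul_truncatedExp (h2 : IsUnit (2 : R)) {f : A} (hf : f ^ 3 = 0) :
    truncatedExp R (-f) * truncatedExp R f = 1 := by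
  simpa using truncatedExp_mul_truncatedExp_neg h2 (f := -f) (by rw [neg_pow, hf, mul_zero])

end TruncatedExp

namespace LieDerivation

variable {R L : Type*} [CommRing R] [LieRing L] [LieAlgebra R L] {D : LieDerivation R L L}

theorem apply_apply_apply_eq_zero (hD : (D : Module.End R L) ^ 3 = 0) (a : L) :
    D (D (D a)) = 0 :=
  LinearMap.congr_fun hD a

theorem lie_apply_apply_apply_eq_neg (h3 : IsUnit (3 : R)) (hD : (D : Module.End R L) ^ 3 = 0)
    (a b : L) : ⁅D (D a), D b⁆ = -⁅D a, D (D b)⁆ := by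
  have hD' := apply_apply_apply_eq_zero hD
  have h : D (D (D ⁅a, b⁆)) = 0 := hD' _
  simp only [apply_lie_eq_add, map_add, hD', zero_lie, lie_zero, zero_add, add_zero] at h
  have h3' : (3 : R) • (⁅D (D a), D b⁆ + ⁅D a, D (D b)⁆) = 0 := by
    rw [← h]; module
  exact eq_neg_of_add_eq_zero_left ((h3.smul_eq_zero).mp h3')

theorem truncatedExp_apply (a : L) :
    truncatedExp R (D : Module.End R L) a = a + D a + Ring.inverse (2 : R) • D (D a) := rfl

theorem truncatedExp_apply_lie (h2 : IsUnit (2 : R)) (h3 : IsUnit (3 : R))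
    (hD : (D : Module.End R L) ^ 3 = 0) (a b : L) :
    truncatedExp R (D : Module.End R L) ⁅a, b⁆ =
      ⁅truncatedExp R (D : Module.End R L) a, truncatedExp R (D : Module.End R L) b⁆ := by
  have hc : Ring.inverse (2 : R) * 2 = 1 := Ring.inverse_mul_cancel _ h2
  simp only [truncatedExp_apply, apply_lie_eq_add, map_add, add_lie, lie_add, smul_lie, lie_smul,
    lie_apply_apply_apply_eq_neg h3 hD, apply_apply_apply_eq_zero hD, lie_zero, neg_zero,
    smul_zero, smul_neg, add_zero]
  match_scalars <;> first | ring1 | linear_combination hc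

noncomputable def truncatedExpEquiv (h2 : IsUnit (2 : R)) (h3 : IsUnit (3 : R))
    (hD : (D : Module.End R L) ^ 3 = 0) : L ≃ₗ⁅R⁆ L where
  toLinearMap := truncatedExp R (D : Module.End R L)
  map_lie' := truncatedExp_apply_lie h2 h3 hD _ _
  invFun := ⇑(truncatedExp R (-(D : Module.End R L)))
  left_inv a := LinearMap.congr_fun (truncatedExp_neg_mul_truncatedExp h2 hD) a
  right_inv a := LinearMap.congr_fun (truncatedExp_mul_truncatedExp_neg h2 hD) a

end LieDerivation

section ThreeGraded

variable {R L : Type*} [CommRing R] [LieRing L] [LieAlgebra R L] {Lc : ℤ → Submodule R L}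

theorem ad_pow_apply_mem (hbracket : ∀ i j : ℤ, ∀ x ∈ Lc i, ∀ y ∈ Lc j, ⁅x, y⁆ ∈ Lc (i + j))
    {k j : ℤ} {x y : L} (hx : x ∈ Lc k) (hy : y ∈ Lc j) (n : ℕ) :
    (LieAlgebra.ad R L x ^ n) y ∈ Lc (n * k + j) := by
  induction n with
  | zero => simpa using hy
  | succ n ih =>
    rw [pow_succ', Module.End.mul_apply, LieAlgebra.ad_apply]
    convert hbracket _ _ x hx _ ih using 2
    push_cast; ring

theorem ad_pow_three_eq_zero (hspan : ⨆ i, Lc i = ⊤)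
    (hbracket : ∀ i j : ℤ, ∀ x ∈ Lc i, ∀ y ∈ Lc j, ⁅x, y⁆ ∈ Lc (i + j))
    (hbound : ∀ i : ℤ, 1 < |i| → Lc i = ⊥) {k : ℤ} {x : L} (hx : x ∈ Lc k) (hk : k ≠ 0) :
    LieAlgebra.ad R L x ^ 3 = 0 := by
  rw [← LinearMap.ker_eq_top, eq_top_iff, ← hspan, iSup_le_iff]
  intro j y hy
  rw [LinearMap.mem_ker]
  by_cases hj : 1 < |j|
  · rw [hbound j hj, Submodule.mem_bot] at hy
    rw [hy, map_zero]
  · have hshift : 1 < |3 * k + j| := by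
      rw [not_lt, abs_le] at hj
      rw [lt_abs]
      omega
    have hmem := ad_pow_apply_mem hbracket hx hy 3
    rwa [Nat.cast_ofNat, hbound _ hshift, Submodule.mem_bot] at hmem

end ThreeGraded

/-- In a 3-graded Lie algebra over a commutative ring in which 2 and 3 are
invertible, every element of L_1 ∪ L_{-1} is algebraic: ∑_{i=0}^{4} (1/i!)(ad x)^i is
an automorphism of L as an R-Lie algebra. -/
theorem statement6
    (R : Type*) [CommRing R]
    (h2 : IsUnit (2 : R)) (h3 : IsUnit (3 : R))
    (L : Type*) [LieRing L] [LieAlgebra R L]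
    (Lc : ℤ → Submodule R L)
    (hdirect : DirectSum.IsInternal Lc)
    (hbracket : ∀ i j : ℤ, ∀ x ∈ Lc i, ∀ y ∈ Lc j, ⁅x, y⁆ ∈ Lc (i + j))
    (hbound : ∀ i : ℤ, 1 < |i| → Lc i = ⊥) :
    ∀ x : L, x ∈ Lc 1 ∨ x ∈ Lc (-1) →
      ∃ f : L ≃ₗ⁅R⁆ L, ∀ a : L,
        f a = (∑ i ∈ Finset.range 5,
          Ring.inverse ((i.factorial : R)) • (LieAlgebra.ad R L x) ^ i) a := by
  intro x hx
  obtain ⟨k, hk, hxk⟩ : ∃ k : ℤ, k ≠ 0 ∧ x ∈ Lc k :=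
    hx.elim (fun h => ⟨1, one_ne_zero, h⟩) (fun h => ⟨-1, by norm_num, h⟩)
  have hx3 : LieAlgebra.ad R L x ^ 3 = 0 :=
    ad_pow_three_eq_zero hdirect.submodule_iSup_eq_top hbracket hbound hxk hk
  have hD : (LieDerivation.ad R L x : Module.End R L) ^ 3 = 0 := by
    rwa [LieDerivation.coe_ad_apply_eq_ad_apply]
  refine ⟨LieDerivation.truncatedExpEquiv h2 h3 hD, fun a => ?_⟩
  rw [sum_range_five_inverse_factorial_smul_pow hx3, ← LieDerivation.coe_ad_apply_eq_ad_apply]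
  rfl
end

section
/- Let L be a finite-dimensional 5-graded Lie algebra over a field k of characteristic different from 2 and 3, and let R be a commutative associative unital k-algebra. Equip the R-Lie algebra L ⊗_k R with the 5-grading (L ⊗_k R)_i = L_i ⊗_k R. Fix σ ∈ {1, −1}. If x ∈ L_σ and s ∈ L_{2σ} are such that x + s is algebraic in L, then for all λ, μ ∈ R the element (x ⊗ λ) + (s ⊗ μ) of (L ⊗_k R)_σ ⊕ (L ⊗_k R)_{2σ} is algebraic in L ⊗_k R. -/
/-!
Write `X = ad x`, `S = ad s` and `c i = 1 / i!`. For nilpotent `D = ad v` the Leibniz rule and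
`c i * c j = (i + j).choose i * c (i + j)` (for `i + j ≤ 4`) show that the truncated exponential
`∑_{i ≤ 4} c i • D ^ i` is a Lie automorphism as soon as the defect
`∑_{i, j ≤ 4, 5 ≤ i + j} c i * c j • ⁅D^i a, D^j b⁆` vanishes identically.

Expand `(λ X + μ S) ^ n` into words; a word with `i` letters `X` and `j` letters `S` maps `L_p`
to `L_{p + (i + 2j) σ}`. As `L_d = 0` for `|d| > 2`, for homogeneous `a, b` only the weights 5
and 6 contribute, and the defect of `λ x + μ s` is `λ^5 Δ₅ + λ^4 μ Δ₄₁ + λ^6 Δ₆`, where the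
`Δ`'s are computed in `L` and do not depend on `λ, μ`. For `λ = μ = 1` the defect vanishes
because `x + s` is algebraic. For `a ∈ L_p`, `b ∈ L_q`, `Δ₅` lies in `L_{p+q+5σ}` and `Δ₄₁ + Δ₆`
in `L_{p+q+6σ}`, so `Δ₅ = 0` and `Δ₄₁ + Δ₆ = 0`. Finally, `Δ₆` involves `X` only and
`6 Δ₆(a, b) = Δ₅(X a, b) + Δ₅(a, X b)`, so `Δ₆ = 0` because `6 ≠ 0`, and then `Δ₄₁ = 0`.
-/

open TensorProduct Finset

section Words

variable {E : Type*} [Ring E]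

/-- The sum of all words in `X` and `S` with `i` letters `X` and `j` letters `S`. -/
def wordSum (X S : E) : ℕ → ℕ → E
  | 0, 0 => 1
  | i + 1, 0 => X * wordSum X S i 0
  | 0, j + 1 => S * wordSum X S 0 j
  | i + 1, j + 1 => X * wordSum X S i (j + 1) + S * wordSum X S (i + 1) j

variable (X S : E)

@[simp] lemma wordSum_zero_zero : wordSum X S 0 0 = 1 := by simp [wordSum]

lemma wordSum_zero_right (i : ℕ) : wordSum X S i 0 = X ^ i := by
  induction i with
  | zero => simp
  | succ i ih => rw [wordSum, ih, pow_succ']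

lemma add_pow_eq_sum_wordSum (n : ℕ) :
    (X + S) ^ n = ∑ p ∈ antidiagonal n, wordSum X S p.1 p.2 := by
  induction n with
  | zero => simp
  | succ n ih =>
    have split : ∀ p ∈ antidiagonal (n + 1), wordSum X S p.1 p.2 =
        (if p.1 = 0 then 0 else X * wordSum X S (p.1 - 1) p.2) +
        (if p.2 = 0 then 0 else S * wordSum X S p.1 (p.2 - 1)) := by
      rintro ⟨_ | i, _ | j⟩ hp <;> simp_all [wordSum]
    rw [sum_congr rfl split, sum_add_distrib, Nat.sum_antidiagonal_succ,
      Nat.sum_antidiagonal_succ', pow_succ', ih, add_mul, mul_sum, mul_sum]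
    simp

lemma map_wordSum {E' F : Type*} [Ring E'] [FunLike F E E'] [RingHomClass F E E'] (f : F)
    (i j : ℕ) : f (wordSum X S i j) = wordSum (f X) (f S) i j := by
  induction i, j using wordSum.induct <;> simp_all [wordSum]

lemma wordSum_smul_smul {A : Type*} [CommRing A] [Algebra A E] (a b : A) (i j : ℕ) :
    wordSum (a • X) (b • S) i j = (a ^ i * b ^ j) • wordSum X S i j := by
  induction i, j using wordSum.induct with
  | case1 => simp
  | case2 i ih => simp only [wordSum, ih, smul_mul_smul_comm, pow_succ', mul_one, pow_zero]
  | case3 j ih => simp only [wordSum, ih, smul_mul_smul_comm, pow_succ', one_mul, pow_zero]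
  | case4 i j ih₁ ih₂ =>
    simp only [wordSum, ih₁, ih₂, smul_mul_smul_comm, smul_add]
    congr 1 <;> congr 1 <;> simp only [Nat.succ_eq_add_one] <;> ring

lemma smul_add_smul_pow {A : Type*} [CommRing A] [Algebra A E] (a b : A) (n : ℕ) :
    (a • X + b • S) ^ n = ∑ p ∈ antidiagonal n, (a ^ p.1 * b ^ p.2) • wordSum X S p.1 p.2 := by
  simp only [add_pow_eq_sum_wordSum, wordSum_smul_smul]

end Words

section TruncatedExponential

variable {A M : Type*} [CommRing A] [LieRing M] [LieAlgebra A M]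

def IsDividedPowerSeq (c : ℕ → A) : Prop :=
  ∀ i j, i + j ≤ 4 → c i * c j = ((i + j).choose i : A) * c (i + j)

lemma IsDividedPowerSeq.map {B : Type*} [CommRing B] {c : ℕ → A} (hc : IsDividedPowerSeq c)
    (f : A →+* B) : IsDividedPowerSeq (f ∘ c) := fun i j hij => by
  simp only [Function.comp_apply]
  rw [← map_mul, hc i j hij, map_mul, map_natCast]

def truncExp (c : ℕ → A) (D : Module.End A M) : Module.End A M :=
  ∑ i ∈ range 5, c i • D ^ i

def expDefect (c : ℕ → A) (D : Module.End A M) : M →ₗ[A] M →ₗ[A] M :=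
  ∑ p ∈ (range 5 ×ˢ range 5).filter (fun p => 5 ≤ p.1 + p.2),
    (c p.1 * c p.2) • (LieAlgebra.ad A M : M →ₗ[A] Module.End A M).compl₁₂ (D ^ p.1) (D ^ p.2)

lemma expDefect_apply (c : ℕ → A) (D : Module.End A M) (a b : M) :
    expDefect c D a b = ∑ p ∈ (range 5 ×ˢ range 5).filter (fun p => 5 ≤ p.1 + p.2),
      (c p.1 * c p.2) • ⁅(D ^ p.1) a, (D ^ p.2) b⁆ := by
  simp [expDefect]

lemma truncExp_lie {c : ℕ → A} (hc : IsDividedPowerSeq c) (v a b : M) :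
    truncExp c (LieAlgebra.ad A M v) ⁅a, b⁆ + expDefect c (LieAlgebra.ad A M v) a b =
      ⁅truncExp c (LieAlgebra.ad A M v) a, truncExp c (LieAlgebra.ad A M v) b⁆ := by
  set D := LieAlgebra.ad A M v
  have low : truncExp c D ⁅a, b⁆ = ∑ p ∈ (range 5 ×ˢ range 5).filter (fun p => ¬ 5 ≤ p.1 + p.2),
      (c p.1 * c p.2) • ⁅(D ^ p.1) a, (D ^ p.2) b⁆ := by
    have hunion : (range 5).biUnion antidiagonal =
        (range 5 ×ˢ range 5).filter (fun p => ¬ 5 ≤ p.1 + p.2) := by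
      ext p
      simp only [mem_biUnion, HasAntidiagonal.mem_antidiagonal, mem_filter, mem_product, mem_range]
      exact ⟨fun ⟨i, hi, h⟩ => by omega, fun h => ⟨p.1 + p.2, by omega, rfl⟩⟩
    have hdisj : (range 5 : Set ℕ).PairwiseDisjoint antidiagonal := fun i _ j _ hij =>
      disjoint_left.mpr fun p hp hp' => hij ((HasAntidiagonal.mem_antidiagonal.mp hp).symm.trans
        (HasAntidiagonal.mem_antidiagonal.mp hp'))
    rw [← hunion, sum_biUnion hdisj, truncExp, LinearMap.sum_apply]
    refine sum_congr rfl fun n hn => ?_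
    rw [LinearMap.smul_apply, LieAlgebra.ad_pow_lie, smul_sum]
    refine sum_congr rfl fun p hp => ?_
    rw [HasAntidiagonal.mem_antidiagonal] at hp
    rw [hc p.1 p.2 (by rw [hp]; exact Nat.lt_succ_iff.mp (mem_range.mp hn)), hp,
      ← Nat.cast_smul_eq_nsmul A, smul_smul, mul_comm]
  have all : ⁅truncExp c D a, truncExp c D b⁆ = ∑ p ∈ range 5 ×ˢ range 5,
      (c p.1 * c p.2) • ⁅(D ^ p.1) a, (D ^ p.2) b⁆ := by
    rw [truncExp, LinearMap.sum_apply, LinearMap.sum_apply, sum_lie, sum_product]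
    refine sum_congr rfl fun i _ => ?_
    rw [lie_sum]
    refine sum_congr rfl fun j _ => ?_
    simp only [LinearMap.smul_apply, smul_lie, lie_smul, smul_smul, mul_comm]
  rw [low, all, expDefect_apply, add_comm, sum_filter_add_sum_filter_not]

lemma expDefect_eq_zero_of_lieEquiv {c : ℕ → A} (hc : IsDividedPowerSeq c) {v : M}
    (f : M ≃ₗ⁅A⁆ M) (hf : ∀ a, f a = truncExp c (LieAlgebra.ad A M v) a) :
    expDefect c (LieAlgebra.ad A M v) = 0 := by
  ext a b
  have h := truncExp_lie hc v a b
  rwa [← hf, ← hf, ← hf, ← f.map_lie, add_eq_left] at h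

lemma exists_lieEquiv_truncExp {c : ℕ → A} (hc : IsDividedPowerSeq c) (hc0 : c 0 = 1) {v : M}
    (hv : IsNilpotent (LieAlgebra.ad A M v)) (hdef : expDefect c (LieAlgebra.ad A M v) = 0) :
    ∃ g : M ≃ₗ⁅A⁆ M, ∀ a, g a = truncExp c (LieAlgebra.ad A M v) a := by
  set D := LieAlgebra.ad A M v
  have hE : truncExp c D = 1 + D * ∑ i ∈ range 4, c (i + 1) • D ^ i := by
    rw [truncExp, sum_range_succ', hc0, pow_zero, one_smul, add_comm, mul_sum]
    simp only [mul_smul_comm, pow_succ']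
  have hunit : IsUnit (truncExp c D) := by
    rw [hE]
    refine (Commute.isNilpotent_mul_right ?_ hv).isUnit_one_add
    exact Commute.sum_right _ _ _ fun i _ => ((Commute.refl D).pow_right i).smul_right _
  let E : M →ₗ⁅A⁆ M :=
    { truncExp c D with
      map_lie' := fun {a b} => by
        have h := truncExp_lie hc v a b
        rwa [hdef, LinearMap.zero_apply, LinearMap.zero_apply, add_zero] at h }
  exact ⟨LieEquiv.ofBijective E ((Module.End.isUnit_iff _).mp hunit), fun a => rfl⟩

end TruncatedExponential

lemma isDividedPowerSeq_inv_factorial {k : Type*} [Field k] (h2 : (2 : k) ≠ 0) (h3 : (3 : k) ≠ 0) :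
    IsDividedPowerSeq fun i => (i.factorial : k)⁻¹ := by
  intro i j hij
  have h24 : ((4 : ℕ).factorial : k) ≠ 0 := by
    rw [show ((4 : ℕ).factorial : k) = 2 * 2 * 2 * 3 by norm_num [Nat.factorial]]
    simp [h2, h3]
  have hfac : ∀ n ≤ 4, (n.factorial : k) ≠ 0 := fun n hn h => h24 <| by
    obtain ⟨m, hm⟩ := Nat.factorial_dvd_factorial hn
    rw [hm, Nat.cast_mul, h, zero_mul]
  have key : ((i + j).choose i : k) * i.factorial * j.factorial = (i + j).factorial := by
    rw [Nat.choose_symm_add, ← Nat.cast_mul, ← Nat.cast_mul,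
      Nat.add_choose_mul_factorial_mul_factorial]
  have hchoose : ((i + j).choose i : k) ≠ 0 := fun h0 =>
    hfac _ hij (by rw [← key, h0, zero_mul, zero_mul])
  beta_reduce
  rw [← key, mul_assoc, mul_inv, mul_inv_cancel_left₀ hchoose, mul_inv]

section DefectParts

variable {A M : Type*} [CommRing A] [LieRing M] [LieAlgebra A M]

/- `Δ₅ = pureDefect5`, `Δ₆ = pureDefect6` and `Δ₄₁ = mixedDefect6` are the parts of
`expDefect c (ad (λ • x + μ • s))` of weight 5 and 6, where `X = ad x` has weight 1 and
`S = ad s` weight 2. -/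

def pureDefect5 (c : ℕ → A) (X : Module.End A M) (a b : M) : M :=
  (c 1 * c 4) • ⁅(X ^ 1) a, (X ^ 4) b⁆ + (c 2 * c 3) • ⁅(X ^ 2) a, (X ^ 3) b⁆ +
    (c 3 * c 2) • ⁅(X ^ 3) a, (X ^ 2) b⁆ + (c 4 * c 1) • ⁅(X ^ 4) a, (X ^ 1) b⁆

def pureDefect6 (c : ℕ → A) (X : Module.End A M) (a b : M) : M :=
  (c 2 * c 4) • ⁅(X ^ 2) a, (X ^ 4) b⁆ + (c 3 * c 3) • ⁅(X ^ 3) a, (X ^ 3) b⁆ +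
    (c 4 * c 2) • ⁅(X ^ 4) a, (X ^ 2) b⁆

def mixedDefect6 (c : ℕ → A) (X S : Module.End A M) (a b : M) : M :=
  (c 1 * c 4) • ⁅wordSum X S 0 1 a, wordSum X S 4 0 b⁆ +
    (c 2 * c 3) •
      (⁅wordSum X S 2 0 a, wordSum X S 2 1 b⁆ + ⁅wordSum X S 1 1 a, wordSum X S 3 0 b⁆) +
    (c 3 * c 2) •
      (⁅wordSum X S 3 0 a, wordSum X S 1 1 b⁆ + ⁅wordSum X S 2 1 a, wordSum X S 2 0 b⁆) +
    (c 4 * c 1) • ⁅wordSum X S 4 0 a, wordSum X S 0 1 b⁆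

lemma six_smul_pureDefect6 {c : ℕ → A} (hc : IsDividedPowerSeq c) (hc1 : c 1 = 1)
    (X : Module.End A M) {a b : M} (ha : (X ^ 5) a = 0) (hb : (X ^ 5) b = 0) :
    (6 : A) • pureDefect6 c X a b = pureDefect5 c X (X a) b + pureDefect5 c X a (X b) := by
  have h1 : c 1 = 2 * c 2 := by simpa [hc1] using hc 1 1 (by norm_num)
  have h2 : c 2 = 3 * c 3 := by simpa [hc1] using hc 2 1 (by norm_num)
  have h3 : c 3 = 4 * c 4 := by simpa [hc1] using hc 3 1 (by norm_num)
  simp only [pureDefect5, pureDefect6, ← Module.End.mul_apply, ← sq, ← pow_succ]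
  simp only [ha, hb, lie_zero, zero_lie, smul_zero, add_zero, zero_add]
  rw [h1, h2, h3]
  module

variable (c : ℕ → A) (x s : M) (l m : A)

lemma expDefect_smul_add_smul
    (hw : ∀ i j, 5 ≤ i + 2 * j → wordSum (LieAlgebra.ad A M x) (LieAlgebra.ad A M s) i j = 0)
    {a b : M} (hz : ∀ i₁ j₁ i₂ j₂, 7 ≤ i₁ + 2 * j₁ + i₂ + 2 * j₂ →
      ⁅wordSum (LieAlgebra.ad A M x) (LieAlgebra.ad A M s) i₁ j₁ a,
        wordSum (LieAlgebra.ad A M x) (LieAlgebra.ad A M s) i₂ j₂ b⁆ = 0) :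
    expDefect c (LieAlgebra.ad A M (l • x + m • s)) a b =
      l ^ 5 • pureDefect5 c (LieAlgebra.ad A M x) a b +
      (l ^ 4 * m) • mixedDefect6 c (LieAlgebra.ad A M x) (LieAlgebra.ad A M s) a b +
      l ^ 6 • pureDefect6 c (LieAlgebra.ad A M x) a b := by
  set X := LieAlgebra.ad A M x
  set S := LieAlgebra.ad A M s
  set D := LieAlgebra.ad A M (l • x + m • s)
  have hpow : ∀ n, D ^ n =
      ∑ p ∈ antidiagonal n, (l ^ p.1 * m ^ p.2) • wordSum X S p.1 p.2 := by
    have hD : D = l • X + m • S := by simp only [D, X, S, map_add, map_smul]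
    intro n
    rw [hD]
    exact smul_add_smul_pow X S l m n
  have hw' : ∀ i j, 5 ≤ i + 2 * j → ∀ v, wordSum X S i j v = 0 := fun i j h v => by
    rw [hw i j h, LinearMap.zero_apply]
  have hD1 : ∀ v, D v = l • wordSum X S 1 0 v + m • wordSum X S 0 1 v := by
    intro v; simpa [Nat.sum_antidiagonal_succ'] using congrArg (· v) (hpow 1)
  have hD2 : ∀ v, (D ^ 2) v = l ^ 2 • wordSum X S 2 0 v + (l * m) • wordSum X S 1 1 v +
      m ^ 2 • wordSum X S 0 2 v := by
    intro v; simp [hpow, Nat.sum_antidiagonal_succ', add_assoc]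
  have hD3 : ∀ v, (D ^ 3) v = l ^ 3 • wordSum X S 3 0 v + (l ^ 2 * m) • wordSum X S 2 1 v := by
    intro v; simp (disch := norm_num) [hpow, Nat.sum_antidiagonal_succ', hw']
  have hD4 : ∀ v, (D ^ 4) v = l ^ 4 • wordSum X S 4 0 v := by
    intro v; simp (disch := norm_num) [hpow, Nat.sum_antidiagonal_succ', hw']
  rw [expDefect_apply, sum_filter, sum_product]
  simp only [sum_range_succ, sum_range_zero]
  norm_num [hD1, hD2, hD3, hD4]
  simp (disch := norm_num) only [hz]
  simp only [smul_zero, add_zero, wordSum_zero_right, pow_one, pureDefect5, pureDefect6,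
    mixedDefect6]
  module

end DefectParts

lemma two_lt_abs_add_mul {σ p : ℤ} {n : ℕ} (hσ : σ = 1 ∨ σ = -1) (h : |p| + 3 ≤ n) :
    2 < |p + n * σ| := by
  rw [lt_abs]
  rcases abs_le.mp (le_refl |p|) with ⟨h₁, h₂⟩
  rcases hσ with rfl | rfl <;> omega

section IsInternal

variable {R M N ι : Type*} [Semiring R] [AddCommMonoid M] [Module R M] [AddCommMonoid N]
  [Module R N] [DecidableEq ι] {V : ι → Submodule R M}

lemma DirectSum.IsInternal.linearMap_eq_zero (hV : DirectSum.IsInternal V) {f : M →ₗ[R] N}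
    (hf : ∀ i, ∀ a ∈ V i, f a = 0) : f = 0 := by
  rw [← LinearMap.ker_eq_top, eq_top_iff, ← hV.submodule_iSup_eq_top]
  exact iSup_le fun i a ha => hf i a ha

lemma DirectSum.IsInternal.eq_zero_of_add_eq_zero {R M : Type*} [Ring R] [AddCommGroup M]
    [Module R M] {V : ι → Submodule R M} (hV : DirectSum.IsInternal V) {i j : ι} (hij : i ≠ j)
    {a b : M}
    (ha : a ∈ V i) (hb : b ∈ V j) (h : a + b = 0) : a = 0 :=
  Submodule.disjoint_def.mp (hV.submodule_iSupIndep.pairwiseDisjoint hij) a ha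
    (eq_neg_of_add_eq_zero_left h ▸ neg_mem hb)

end IsInternal

section Graded

variable {k L : Type*} [CommRing k] [LieRing L] [LieAlgebra k L] {Lc : ℤ → Submodule k L}
  {σ : ℤ} {x s : L}

lemma wordSum_apply_mem (hbr : ∀ i j : ℤ, ∀ x ∈ Lc i, ∀ y ∈ Lc j, ⁅x, y⁆ ∈ Lc (i + j))
    (hx : x ∈ Lc σ) (hs : s ∈ Lc (2 * σ)) (i j : ℕ) {p : ℤ} {a : L} (ha : a ∈ Lc p) :
    wordSum (LieAlgebra.ad k L x) (LieAlgebra.ad k L s) i j a ∈ Lc (p + (i + 2 * j : ℕ) * σ) := by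
  have hX : ∀ {d v}, v ∈ Lc d → LieAlgebra.ad k L x v ∈ Lc (d + σ) := fun hv => by
    rw [add_comm]; exact hbr _ _ x hx _ hv
  have hS : ∀ {d v}, v ∈ Lc d → LieAlgebra.ad k L s v ∈ Lc (d + 2 * σ) := fun hv => by
    rw [add_comm]; exact hbr _ _ s hs _ hv
  induction i, j using wordSum.induct with
  | case1 => simpa [wordSum] using ha
  | case2 i ih =>
    rw [wordSum, Module.End.mul_apply]
    convert hX ih using 2; push_cast; ring
  | case3 j ih =>
    rw [wordSum, Module.End.mul_apply]
    convert hS ih using 2; push_cast; ring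
  | case4 i j ih₁ ih₂ =>
    rw [wordSum, LinearMap.add_apply, Module.End.mul_apply, Module.End.mul_apply]
    exact add_mem (by convert hX ih₁ using 2; push_cast; ring)
      (by convert hS ih₂ using 2; push_cast; ring)

lemma lie_wordSum_mem (hbr : ∀ i j : ℤ, ∀ x ∈ Lc i, ∀ y ∈ Lc j, ⁅x, y⁆ ∈ Lc (i + j))
    (hx : x ∈ Lc σ) (hs : s ∈ Lc (2 * σ)) {p q : ℤ} {a b : L} (ha : a ∈ Lc p) (hb : b ∈ Lc q)
    {i₁ j₁ i₂ j₂ n : ℕ} (hn : i₁ + 2 * j₁ + i₂ + 2 * j₂ = n) :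
    ⁅wordSum (LieAlgebra.ad k L x) (LieAlgebra.ad k L s) i₁ j₁ a,
      wordSum (LieAlgebra.ad k L x) (LieAlgebra.ad k L s) i₂ j₂ b⁆ ∈ Lc (p + q + n * σ) := by
  convert hbr _ _ _ (wordSum_apply_mem hbr hx hs i₁ j₁ ha) _
    (wordSum_apply_mem hbr hx hs i₂ j₂ hb) using 2
  rw [← hn]; push_cast; ring

lemma eq_zero_of_mem_of_two_lt_abs (hbound : ∀ i : ℤ, 2 < |i| → Lc i = ⊥) {d : ℤ} {a : L}
    (ha : a ∈ Lc d) (hd : 2 < |d|) : a = 0 := by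
  simpa [hbound d hd] using ha

lemma wordSum_eq_zero (hdirect : DirectSum.IsInternal Lc)
    (hbr : ∀ i j : ℤ, ∀ x ∈ Lc i, ∀ y ∈ Lc j, ⁅x, y⁆ ∈ Lc (i + j))
    (hbound : ∀ i : ℤ, 2 < |i| → Lc i = ⊥) (hσ : σ = 1 ∨ σ = -1)
    (hx : x ∈ Lc σ) (hs : s ∈ Lc (2 * σ)) {i j : ℕ} (h : 5 ≤ i + 2 * j) :
    wordSum (LieAlgebra.ad k L x) (LieAlgebra.ad k L s) i j = 0 := by
  refine hdirect.linearMap_eq_zero fun p a ha => ?_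
  by_cases hp : |p| ≤ 2
  · exact eq_zero_of_mem_of_two_lt_abs hbound (wordSum_apply_mem hbr hx hs i j ha)
      (two_lt_abs_add_mul hσ (by push_cast; omega))
  · rw [eq_zero_of_mem_of_two_lt_abs hbound ha (by omega), map_zero]

lemma lie_wordSum_eq_zero (hbr : ∀ i j : ℤ, ∀ x ∈ Lc i, ∀ y ∈ Lc j, ⁅x, y⁆ ∈ Lc (i + j))
    (hbound : ∀ i : ℤ, 2 < |i| → Lc i = ⊥) (hσ : σ = 1 ∨ σ = -1)
    (hx : x ∈ Lc σ) (hs : s ∈ Lc (2 * σ)) {p q : ℤ} {a b : L} (ha : a ∈ Lc p) (hb : b ∈ Lc q)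
    {i₁ j₁ i₂ j₂ : ℕ} (h : 7 ≤ i₁ + 2 * j₁ + i₂ + 2 * j₂) :
    ⁅wordSum (LieAlgebra.ad k L x) (LieAlgebra.ad k L s) i₁ j₁ a,
      wordSum (LieAlgebra.ad k L x) (LieAlgebra.ad k L s) i₂ j₂ b⁆ = 0 := by
  by_cases hp : |p| ≤ 2
  · by_cases hq : |q| ≤ 2
    · refine eq_zero_of_mem_of_two_lt_abs hbound (lie_wordSum_mem hbr hx hs ha hb rfl)
        (two_lt_abs_add_mul hσ ?_)
      have := abs_add_le p q
      push_cast; omega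
    · rw [eq_zero_of_mem_of_two_lt_abs hbound hb (by omega), map_zero, lie_zero]
  · rw [eq_zero_of_mem_of_two_lt_abs hbound ha (by omega), map_zero, zero_lie]

variable (c : ℕ → k)

lemma expDefect_ad_add_eq (hdirect : DirectSum.IsInternal Lc)
    (hbr : ∀ i j : ℤ, ∀ x ∈ Lc i, ∀ y ∈ Lc j, ⁅x, y⁆ ∈ Lc (i + j))
    (hbound : ∀ i : ℤ, 2 < |i| → Lc i = ⊥) (hσ : σ = 1 ∨ σ = -1)
    (hx : x ∈ Lc σ) (hs : s ∈ Lc (2 * σ)) {p q : ℤ} {a b : L} (ha : a ∈ Lc p) (hb : b ∈ Lc q) :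
    expDefect c (LieAlgebra.ad k L (x + s)) a b =
      pureDefect5 c (LieAlgebra.ad k L x) a b +
      mixedDefect6 c (LieAlgebra.ad k L x) (LieAlgebra.ad k L s) a b +
      pureDefect6 c (LieAlgebra.ad k L x) a b := by
  simpa using expDefect_smul_add_smul c x s 1 1
    (fun _ _ h => wordSum_eq_zero hdirect hbr hbound hσ hx hs h)
    (fun _ _ _ _ h => lie_wordSum_eq_zero hbr hbound hσ hx hs ha hb h)

lemma pureDefect5_eq_zero (hdirect : DirectSum.IsInternal Lc)
    (hbr : ∀ i j : ℤ, ∀ x ∈ Lc i, ∀ y ∈ Lc j, ⁅x, y⁆ ∈ Lc (i + j))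
    (hbound : ∀ i : ℤ, 2 < |i| → Lc i = ⊥) (hσ : σ = 1 ∨ σ = -1)
    (hx : x ∈ Lc σ) (hs : s ∈ Lc (2 * σ)) (hdef : expDefect c (LieAlgebra.ad k L (x + s)) = 0)
    {p q : ℤ} {a b : L} (ha : a ∈ Lc p) (hb : b ∈ Lc q) :
    pureDefect5 c (LieAlgebra.ad k L x) a b = 0 := by
  have h := expDefect_ad_add_eq c hdirect hbr hbound hσ hx hs ha hb
  rw [hdef, LinearMap.zero_apply, LinearMap.zero_apply, add_assoc] at h
  have hne : p + q + (5 : ℕ) * σ ≠ p + q + (6 : ℕ) * σ := by rcases hσ with rfl | rfl <;> omega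
  refine hdirect.eq_zero_of_add_eq_zero hne ?_ (add_mem ?_ ?_) h.symm
  · simp only [pureDefect5, ← wordSum_zero_right (LieAlgebra.ad k L x) (LieAlgebra.ad k L s)]
    refine add_mem (add_mem (add_mem ?_ ?_) ?_) ?_ <;>
      exact Submodule.smul_mem _ _ (lie_wordSum_mem hbr hx hs ha hb rfl)
  · simp only [mixedDefect6]
    refine add_mem (add_mem (add_mem ?_ (Submodule.smul_mem _ _ (add_mem ?_ ?_)))
      (Submodule.smul_mem _ _ (add_mem ?_ ?_))) ?_ <;>
      first
      | exact Submodule.smul_mem _ _ (lie_wordSum_mem hbr hx hs ha hb rfl)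
      | exact lie_wordSum_mem hbr hx hs ha hb rfl
  · simp only [pureDefect6, ← wordSum_zero_right (LieAlgebra.ad k L x) (LieAlgebra.ad k L s)]
    refine add_mem (add_mem ?_ ?_) ?_ <;>
      exact Submodule.smul_mem _ _ (lie_wordSum_mem hbr hx hs ha hb rfl)

end Graded

lemma weightDefects_eq_zero {k L : Type*} [Field k] [LieRing L] [LieAlgebra k L]
    {Lc : ℤ → Submodule k L} {σ : ℤ} {x s : L} {c : ℕ → k} (h6 : (6 : k) ≠ 0)
    (hc : IsDividedPowerSeq c) (hc1 : c 1 = 1) (hdirect : DirectSum.IsInternal Lc)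
    (hbr : ∀ i j : ℤ, ∀ x ∈ Lc i, ∀ y ∈ Lc j, ⁅x, y⁆ ∈ Lc (i + j))
    (hbound : ∀ i : ℤ, 2 < |i| → Lc i = ⊥) (hσ : σ = 1 ∨ σ = -1)
    (hx : x ∈ Lc σ) (hs : s ∈ Lc (2 * σ)) (hdef : expDefect c (LieAlgebra.ad k L (x + s)) = 0)
    {p q : ℤ} {a b : L} (ha : a ∈ Lc p) (hb : b ∈ Lc q) :
    pureDefect5 c (LieAlgebra.ad k L x) a b = 0 ∧
      mixedDefect6 c (LieAlgebra.ad k L x) (LieAlgebra.ad k L s) a b = 0 ∧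
      pureDefect6 c (LieAlgebra.ad k L x) a b = 0 := by
  set X := LieAlgebra.ad k L x
  have h5 : ∀ {p q a b}, a ∈ Lc p → b ∈ Lc q → pureDefect5 c X a b = 0 :=
    pureDefect5_eq_zero c hdirect hbr hbound hσ hx hs hdef
  have hX5 : X ^ 5 = 0 := by
    rw [← wordSum_zero_right X (LieAlgebra.ad k L s)]
    exact wordSum_eq_zero hdirect hbr hbound hσ hx hs (by norm_num)
  have h6' : pureDefect6 c X a b = 0 := by
    have h := six_smul_pureDefect6 hc hc1 X (a := a) (b := b) (by simp [hX5]) (by simp [hX5])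
    have hXa : X a ∈ Lc (σ + p) := hbr σ p x hx a ha
    have hXb : X b ∈ Lc (σ + q) := hbr σ q x hx b hb
    rw [h5 hXa hb, h5 ha hXb, add_zero] at h
    exact (smul_eq_zero.mp h).resolve_left h6
  have h := expDefect_ad_add_eq c hdirect hbr hbound hσ hx hs ha hb
  rw [hdef, h5 ha hb, h6', LinearMap.zero_apply, LinearMap.zero_apply, zero_add, add_zero] at h
  exact ⟨h5 ha hb, h.symm, h6'⟩

section BaseChange

variable {k R L : Type*} [CommRing k] [CommRing R] [Algebra k R] [LieRing L] [LieAlgebra k L]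

lemma ad_one_tmul (x : L) :
    LieAlgebra.ad R (R ⊗[k] L) (1 ⊗ₜ x) = (LieAlgebra.ad k L x).baseChange R := by
  ext y
  simp [LieAlgebra.ExtendScalars.bracket_tmul]

lemma wordSum_baseChange (X S : Module.End k L) (i j : ℕ) :
    wordSum (X.baseChange R) (S.baseChange R) i j = (wordSum X S i j).baseChange R :=
  (map_wordSum X S (Module.End.baseChangeHom k R L) i j).symm

lemma eq_zero_of_one_tmul {N : Type*} [AddCommGroup N] [Module R N] {Lc : ℤ → Submodule k L}
    (hdirect : DirectSum.IsInternal Lc) {f : R ⊗[k] L →ₗ[R] N}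
    (hf : ∀ p, ∀ a ∈ Lc p, f (1 ⊗ₜ a) = 0) : f = 0 := by
  have h (a : L) : f (1 ⊗ₜ a) = 0 := by
    refine Submodule.iSup_induction Lc (motive := fun a => f (1 ⊗ₜ a) = 0) ?_ hf (by simp) ?_
    · simp [hdirect.submodule_iSup_eq_top]
    · intro a b ha hb
      rw [tmul_add, map_add, ha, hb, add_zero]
  refine LinearMap.ext fun ξ => ?_
  induction ξ using TensorProduct.induction_on with
  | zero => simp
  | tmul r a => rw [← mul_one r, ← smul_eq_mul, ← smul_tmul', map_smul, h, smul_zero,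
      LinearMap.zero_apply]
  | add ξ η hξ hη => simp [hξ, hη]

variable (c : ℕ → k) (X S : Module.End k L) (a b : L)

lemma pureDefect5_baseChange :
    pureDefect5 (algebraMap k R ∘ c) (X.baseChange R) (1 ⊗ₜ a) (1 ⊗ₜ b) =
      (1 : R) ⊗ₜ pureDefect5 c X a b := by
  simp [pureDefect5, ← LinearMap.baseChange_pow, LieAlgebra.ExtendScalars.bracket_tmul,
    ← map_mul, tmul_add]

lemma pureDefect6_baseChange :
    pureDefect6 (algebraMap k R ∘ c) (X.baseChange R) (1 ⊗ₜ a) (1 ⊗ₜ b) =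
      (1 : R) ⊗ₜ pureDefect6 c X a b := by
  simp [pureDefect6, ← LinearMap.baseChange_pow, LieAlgebra.ExtendScalars.bracket_tmul,
    ← map_mul, tmul_add]

lemma mixedDefect6_baseChange :
    mixedDefect6 (algebraMap k R ∘ c) (X.baseChange R) (S.baseChange R) (1 ⊗ₜ a) (1 ⊗ₜ b) =
      (1 : R) ⊗ₜ mixedDefect6 c X S a b := by
  simp [mixedDefect6, wordSum_baseChange, LieAlgebra.ExtendScalars.bracket_tmul,
    ← map_mul, tmul_add]

end BaseChange

section FiveGraded

variable {k L : Type*} [Field k] [LieRing L] [LieAlgebra k L] {Lc : ℤ → Submodule k L}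
  {σ : ℤ} {x s : L} (R : Type*) [CommRing R] [Algebra k R]

lemma tmul_add_tmul_eq_smul (lam mu : R) :
    lam ⊗ₜ[k] x + mu ⊗ₜ[k] s = lam • (1 ⊗ₜ x) + mu • (1 ⊗ₜ s) := by
  simp [smul_tmul']

lemma isNilpotent_ad_tmul_add_tmul (hdirect : DirectSum.IsInternal Lc)
    (hbr : ∀ i j : ℤ, ∀ x ∈ Lc i, ∀ y ∈ Lc j, ⁅x, y⁆ ∈ Lc (i + j))
    (hbound : ∀ i : ℤ, 2 < |i| → Lc i = ⊥) (hσ : σ = 1 ∨ σ = -1)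
    (hx : x ∈ Lc σ) (hs : s ∈ Lc (2 * σ)) (lam mu : R) :
    IsNilpotent (LieAlgebra.ad R (R ⊗[k] L) (lam ⊗ₜ x + mu ⊗ₜ s)) := by
  refine ⟨5, ?_⟩
  rw [tmul_add_tmul_eq_smul, map_add, map_smul, map_smul, ad_one_tmul, ad_one_tmul]
  refine (smul_add_smul_pow _ _ lam mu 5).trans (sum_eq_zero fun p hp => ?_)
  rw [HasAntidiagonal.mem_antidiagonal] at hp
  rw [wordSum_baseChange, wordSum_eq_zero hdirect hbr hbound hσ hx hs (by omega),
    LinearMap.baseChange_zero, smul_zero]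

lemma expDefect_ad_tmul_add_tmul {c : ℕ → k} (h6 : (6 : k) ≠ 0) (hc : IsDividedPowerSeq c)
    (hc1 : c 1 = 1) (hdirect : DirectSum.IsInternal Lc)
    (hbr : ∀ i j : ℤ, ∀ x ∈ Lc i, ∀ y ∈ Lc j, ⁅x, y⁆ ∈ Lc (i + j))
    (hbound : ∀ i : ℤ, 2 < |i| → Lc i = ⊥) (hσ : σ = 1 ∨ σ = -1)
    (hx : x ∈ Lc σ) (hs : s ∈ Lc (2 * σ)) (hdef : expDefect c (LieAlgebra.ad k L (x + s)) = 0)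
    (lam mu : R) :
    expDefect (algebraMap k R ∘ c) (LieAlgebra.ad R (R ⊗[k] L) (lam ⊗ₜ x + mu ⊗ₜ s)) = 0 := by
  refine eq_zero_of_one_tmul hdirect fun p a ha => eq_zero_of_one_tmul hdirect fun q b hb => ?_
  obtain ⟨h5, h41, h6'⟩ := weightDefects_eq_zero h6 hc hc1 hdirect hbr hbound hσ hx hs hdef ha hb
  have hw : ∀ i j, 5 ≤ i + 2 * j →
      wordSum (LieAlgebra.ad R (R ⊗[k] L) (1 ⊗ₜ x)) (LieAlgebra.ad R _ (1 ⊗ₜ s)) i j = 0 := by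
    intro i j h
    rw [ad_one_tmul, ad_one_tmul, wordSum_baseChange,
      wordSum_eq_zero hdirect hbr hbound hσ hx hs h, LinearMap.baseChange_zero]
  have hz : ∀ i₁ j₁ i₂ j₂, 7 ≤ i₁ + 2 * j₁ + i₂ + 2 * j₂ →
      ⁅wordSum (LieAlgebra.ad R (R ⊗[k] L) (1 ⊗ₜ x)) (LieAlgebra.ad R _ (1 ⊗ₜ s)) i₁ j₁ (1 ⊗ₜ a),
        wordSum (LieAlgebra.ad R (R ⊗[k] L) (1 ⊗ₜ x)) (LieAlgebra.ad R _ (1 ⊗ₜ s)) i₂ j₂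
          (1 ⊗ₜ b)⁆ = 0 := by
    intro i₁ j₁ i₂ j₂ h
    rw [ad_one_tmul, ad_one_tmul, wordSum_baseChange, wordSum_baseChange,
      LinearMap.baseChange_tmul, LinearMap.baseChange_tmul,
      LieAlgebra.ExtendScalars.bracket_tmul, lie_wordSum_eq_zero hbr hbound hσ hx hs ha hb h,
      tmul_zero]
  rw [tmul_add_tmul_eq_smul, expDefect_smul_add_smul _ _ _ _ _ hw hz, ad_one_tmul, ad_one_tmul,
    pureDefect5_baseChange, mixedDefect6_baseChange, pureDefect6_baseChange, h5, h41, h6']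
  simp

end FiveGraded

theorem statement7_general
    (k : Type*) [Field k] (hchar2 : (2 : k) ≠ 0) (hchar3 : (3 : k) ≠ 0)
    (L : Type*) [LieRing L] [LieAlgebra k L]
    (Lc : ℤ → Submodule k L)
    (hdirect : DirectSum.IsInternal Lc)
    (hbracket : ∀ i j : ℤ, ∀ x ∈ Lc i, ∀ y ∈ Lc j, ⁅x, y⁆ ∈ Lc (i + j))
    (hbound : ∀ i : ℤ, 2 < |i| → Lc i = ⊥)
    (R : Type*) [CommRing R] [Algebra k R]
    (σ : ℤ) (hσ : σ = 1 ∨ σ = -1)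
    (x : L) (hx : x ∈ Lc σ) (s : L) (hs : s ∈ Lc (2 * σ))
    (halg : ∃ f : L ≃ₗ⁅k⁆ L, ∀ a : L,
      f a = (∑ i ∈ Finset.range 5,
        ((i.factorial : k)⁻¹) • (LieAlgebra.ad k L (x + s)) ^ i) a) :
    ∀ lam mu : R,
      ∃ g : (R ⊗[k] L) ≃ₗ⁅R⁆ (R ⊗[k] L), ∀ a : R ⊗[k] L,
        g a = (∑ i ∈ Finset.range 5,
          (algebraMap k R ((i.factorial : k)⁻¹)) •
            (LieAlgebra.ad R (R ⊗[k] L) (lam ⊗ₜ[k] x + mu ⊗ₜ[k] s)) ^ i) a := by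
  intro lam mu
  obtain ⟨f, hf⟩ := halg
  have hc := isDividedPowerSeq_inv_factorial hchar2 hchar3
  have h6 : (6 : k) ≠ 0 := by
    rw [show (6 : k) = 2 * 3 by norm_num]
    exact mul_ne_zero hchar2 hchar3
  have hdef := expDefect_eq_zero_of_lieEquiv hc f hf
  exact exists_lieEquiv_truncExp (hc.map (algebraMap k R)) (by simp)
    (isNilpotent_ad_tmul_add_tmul R hdirect hbracket hbound hσ hx hs lam mu)
    (expDefect_ad_tmul_add_tmul R h6 hc (by simp) hdirect hbracket hbound hσ hx hs hdef lam mu)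

/-- Let L be a finite-dimensional 5-graded Lie algebra over a field k of
characteristic ≠ 2, 3, and let R be a commutative k-algebra.  If x ∈ L_σ and s ∈ L_{2σ}
(σ ∈ {1,-1}) are such that x + s is algebraic in L, then for all λ, μ ∈ R the element
λ ⊗ x + μ ⊗ s is algebraic in L ⊗_k R (= R ⊗[k] L). -/
theorem statement7
    (k : Type*) [Field k] (hchar2 : (2 : k) ≠ 0) (hchar3 : (3 : k) ≠ 0)
    (L : Type*) [LieRing L] [LieAlgebra k L] [FiniteDimensional k L]
    (Lc : ℤ → Submodule k L)
    (hdirect : DirectSum.IsInternal Lc)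
    (hbracket : ∀ i j : ℤ, ∀ x ∈ Lc i, ∀ y ∈ Lc j, ⁅x, y⁆ ∈ Lc (i + j))
    (hbound : ∀ i : ℤ, 2 < |i| → Lc i = ⊥)
    (R : Type*) [CommRing R] [Algebra k R]
    (σ : ℤ) (hσ : σ = 1 ∨ σ = -1)
    (x : L) (hx : x ∈ Lc σ) (s : L) (hs : s ∈ Lc (2 * σ))
    (halg : ∃ f : L ≃ₗ⁅k⁆ L, ∀ a : L,
      f a = (∑ i ∈ Finset.range 5,
        ((i.factorial : k)⁻¹) • (LieAlgebra.ad k L (x + s)) ^ i) a) :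
    ∀ lam mu : R,
      ∃ g : (R ⊗[k] L) ≃ₗ⁅R⁆ (R ⊗[k] L), ∀ a : R ⊗[k] L,
        g a = (∑ i ∈ Finset.range 5,
          (algebraMap k R ((i.factorial : k)⁻¹)) •
            (LieAlgebra.ad R (R ⊗[k] L) (lam ⊗ₜ[k] x + mu ⊗ₜ[k] s)) ^ i) a :=
  statement7_general k hchar2 hchar3 L Lc hdirect hbracket hbound R σ hσ x hx s hs halg
end

section
/- Let L be a finite-dimensional 5-graded Lie algebra over a field k of characteristic different from 2 and 3, and let K be a field extension of k. Equip L ⊗_k K with the 5-grading (L ⊗_k K)_i = L_i ⊗_k K. If the K-Lie algebra L ⊗_k K is algebraic, then L is algebraic. -/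
open TensorProduct

/-- Let L be a finite-dimensional 5-graded Lie algebra over a field k of
characteristic ≠ 2, 3, and K a field extension of k.  If L ⊗_k K (with the induced
5-grading (L ⊗_k K)_i = L_i ⊗_k K) is algebraic as a K-Lie algebra, then L is algebraic. -/
theorem statement9
    (k : Type*) [Field k] (hchar2 : (2 : k) ≠ 0) (hchar3 : (3 : k) ≠ 0)
    (L : Type*) [LieRing L] [LieAlgebra k L] [FiniteDimensional k L]
    (Lc : ℤ → Submodule k L)
    (hdirect : DirectSum.IsInternal Lc)
    (hbracket : ∀ i j : ℤ, ∀ x ∈ Lc i, ∀ y ∈ Lc j, ⁅x, y⁆ ∈ Lc (i + j))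
    (hbound : ∀ i : ℤ, 2 < |i| → Lc i = ⊥)
    (K : Type*) [Field K] [Algebra k K]
    (halg : ∀ σ : ℤ, σ = 1 ∨ σ = -1 →
      ∀ x ∈ (Lc σ).baseChange K, ∀ s ∈ (Lc (2 * σ)).baseChange K,
        ∃ f : (K ⊗[k] L) ≃ₗ⁅K⁆ (K ⊗[k] L), ∀ a : K ⊗[k] L,
          f a = (∑ i ∈ Finset.range 5,
            ((i.factorial : K)⁻¹) • (LieAlgebra.ad K (K ⊗[k] L) (x + s)) ^ i) a) :
    ∀ σ : ℤ, σ = 1 ∨ σ = -1 → ∀ x ∈ Lc σ, ∀ s ∈ Lc (2 * σ),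
      ∃ f : L ≃ₗ⁅k⁆ L, ∀ a : L,
        f a = (∑ i ∈ Finset.range 5,
          ((i.factorial : k)⁻¹) • (LieAlgebra.ad k L (x + s)) ^ i) a := by
  classical
  intro σ hσ x hx s hs
  set y := x + s with hy
  set E : L →ₗ[k] L :=
    ∑ i ∈ Finset.range 5, ((i.factorial : k)⁻¹) • (LieAlgebra.ad k L y) ^ i with hE
  obtain ⟨f, hf⟩ := halg σ hσ (1 ⊗ₜ x) (Submodule.tmul_mem_baseChange_of_mem 1 hx)
      (1 ⊗ₜ s) (Submodule.tmul_mem_baseChange_of_mem 1 hs)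
  have hxy : (1 : K) ⊗ₜ[k] x + (1 : K) ⊗ₜ[k] s = (1 : K) ⊗ₜ[k] y := by
    rw [hy, TensorProduct.tmul_add]
  -- a left inverse of the map a ↦ 1 ⊗ₜ a
  obtain ⟨φ, hφ⟩ := (Algebra.linearMap k K).exists_leftInverse_of_injective
    (LinearMap.ker_eq_bot.mpr (algebraMap k K).injective)
  set ψ : K ⊗[k] L →ₗ[k] L :=
    (TensorProduct.lid k L).toLinearMap ∘ₗ TensorProduct.map φ LinearMap.id with hψ
  have hψι : ∀ a : L, ψ ((1 : K) ⊗ₜ[k] a) = a := by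
    intro a
    have h1 : φ 1 = 1 := by
      have := LinearMap.congr_fun hφ 1
      simpa using this
    simp [hψ, h1]
  have hι_inj : Function.Injective (fun a : L => (1 : K) ⊗ₜ[k] a) := by
    intro a b hab
    have := congrArg ψ hab
    simpa [hψι] using this
  -- ad powers commute with a ↦ 1 ⊗ₜ a
  have hadpow : ∀ (i : ℕ) (a : L),
      ((LieAlgebra.ad K (K ⊗[k] L) ((1 : K) ⊗ₜ[k] y)) ^ i) ((1 : K) ⊗ₜ[k] a)
        = (1 : K) ⊗ₜ[k] (((LieAlgebra.ad k L y) ^ i) a) := by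
    intro i
    induction i with
    | zero => intro a; simp
    | succ n ih =>
      intro a
      rw [pow_succ', pow_succ', Module.End.mul_apply, Module.End.mul_apply,
        LieAlgebra.ad_apply, LieAlgebra.ad_apply, ih,
        LieAlgebra.ExtendScalars.bracket_tmul, one_mul]
  -- the key commutation: f (1 ⊗ a) = 1 ⊗ (E a)
  have hkey : ∀ a : L, f ((1 : K) ⊗ₜ[k] a) = (1 : K) ⊗ₜ[k] (E a) := by
    intro a
    rw [hf, hxy]
    rw [LinearMap.sum_apply, hE, LinearMap.sum_apply, TensorProduct.tmul_sum]
    refine Finset.sum_congr rfl fun i _ => ?_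
    rw [LinearMap.smul_apply, LinearMap.smul_apply, hadpow]
    have h1 : ((i.factorial : K))⁻¹ = algebraMap k K ((i.factorial : k)⁻¹) := by
      rw [map_inv₀, map_natCast]
    rw [h1, algebraMap_smul, TensorProduct.tmul_smul]
  have hfl : ∀ u v : K ⊗[k] L, f ⁅u, v⁆ = ⁅f u, f v⁆ := by
    intro u v
    exact LieHom.map_lie f.toLieHom u v
  -- E preserves brackets
  have hmul : ∀ a b : L, E ⁅a, b⁆ = ⁅E a, E b⁆ := by
    intro a b
    apply hι_inj
    show (1 : K) ⊗ₜ[k] (E ⁅a, b⁆) = (1 : K) ⊗ₜ[k] ⁅E a, E b⁆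
    have h1 : (1 : K) ⊗ₜ[k] ⁅a, b⁆ = ⁅(1 : K) ⊗ₜ[k] a, (1 : K) ⊗ₜ[k] b⁆ := by
      rw [LieAlgebra.ExtendScalars.bracket_tmul, one_mul]
    rw [← hkey, h1, hfl, hkey, hkey,
      LieAlgebra.ExtendScalars.bracket_tmul, one_mul]
  -- E is injective, hence bijective
  have hinj : Function.Injective E := by
    intro a b hab
    apply hι_inj
    have h1 : f ((1 : K) ⊗ₜ[k] a) = f ((1 : K) ⊗ₜ[k] b) := by
      rw [hkey, hkey, hab]
    exact f.injective h1
  have hbij : Function.Bijective E :=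
    ⟨hinj, (LinearMap.injective_iff_surjective).mp hinj⟩
  set Ehom : L →ₗ⁅k⁆ L := { E with map_lie' := fun {a b} => hmul a b } with hEhom
  refine ⟨LieEquiv.ofBijective Ehom hbij, fun a => rfl⟩
end

section
/- Let L be a simple ℤ-graded Lie algebra over a field k with L ≠ L_0. If f is a Lie algebra automorphism of L such that f(x) = x for every x ∈ L_i and every i ≠ 0, then f is the identity map of L. -/
/-!
The elements commuting with every homogeneous element of nonzero degree form an ideal: for `x`
of degree `j` and `y` of degree `i ≠ 0`, `⁅⁅x, z⁆, y⁆ = -⁅z, ⁅x, y⁆⁆`, and either `i + j ≠ 0`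
or `j ≠ 0` lets `z` kill this term. If this ideal were all of `L`, every nonzero degree would lie
in the center of the simple algebra `L`, which is trivial, forcing `L = L₀`; hence the ideal is
zero. For `x ∈ L₀` and `y` of degree `i ≠ 0`, `⁅f x, y⁆ = f ⁅x, y⁆ = ⁅x, y⁆`, so `f x - x` lies
in this ideal and `f` fixes `L₀` as well.
-/

namespace LieAlgebra

variable {R L ι : Type*} [CommRing R] [LieRing L] [LieAlgebra R L] [AddMonoid ι]
  (ℒ : ι → Submodule R L)

def nonzeroDegreeCentralizer : Submodule R L where
  carrier := {z | ∀ i ≠ 0, ∀ y ∈ ℒ i, ⁅z, y⁆ = 0}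
  add_mem' ha hb i hi y hy := by rw [add_lie, ha i hi y hy, hb i hi y hy, add_zero]
  zero_mem' _ _ _ _ := zero_lie _
  smul_mem' c _ ha i hi y hy := by rw [smul_lie, ha i hi y hy, smul_zero]

variable {ℒ} in
theorem lie_mem_nonzeroDegreeCentralizer_of_mem [SetLike.GradedBracket ℒ] {j : ι} {x z : L}
    (hx : x ∈ ℒ j) (hz : z ∈ nonzeroDegreeCentralizer ℒ) : ⁅x, z⁆ ∈ nonzeroDegreeCentralizer ℒ := by
  intro i hi y hy
  rw [lie_lie, hz i hi y hy, lie_zero, zero_sub, neg_eq_zero]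
  by_cases hji : j + i = 0
  · have hj : j ≠ 0 := by rintro rfl; exact hi (by simpa using hji)
    rw [leibniz_lie, hz j hj x hx, zero_lie, hz i hi y hy, lie_zero, add_zero]
  · exact hz (j + i) hji _ (SetLike.GradedBracket.bracket_mem hx hy)

def nonzeroDegreeCentralizerIdeal [SetLike.GradedBracket ℒ] (hℒ : ⨆ i, ℒ i = ⊤) :
    LieIdeal R L where
  toSubmodule := nonzeroDegreeCentralizer ℒ
  lie_mem {x z} hz := by
    have hx : x ∈ ⨆ i, ℒ i := hℒ ▸ Submodule.mem_top
    refine Submodule.iSup_induction ℒ (motive := fun x => ⁅x, z⁆ ∈ nonzeroDegreeCentralizer ℒ) hx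
      (fun j x hx => lie_mem_nonzeroDegreeCentralizer_of_mem hx hz) ?_ fun x₁ x₂ h₁ h₂ => ?_
    · simp
    · simpa [add_lie] using add_mem h₁ h₂

theorem nonzeroDegreeCentralizerIdeal_eq_bot [SetLike.GradedBracket ℒ] [IsSimple R L]
    (hℒ : ⨆ i, ℒ i = ⊤) (h₀ : ℒ 0 ≠ ⊤) :
    nonzeroDegreeCentralizerIdeal ℒ hℒ = ⊥ := by
  refine (IsSimple.eq_bot_or_eq_top _).resolve_right fun htop => h₀ ?_
  have hcenter : ∀ i ≠ 0, ℒ i = ⊥ := by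
    intro i hi
    refine (Submodule.eq_bot_iff _).2 fun y hy => ?_
    have : y ∈ center R L := fun w =>
      (htop ▸ LieSubmodule.mem_top w : w ∈ nonzeroDegreeCentralizerIdeal ℒ hℒ) i hi y hy
    rwa [center_eq_bot, LieSubmodule.mem_bot] at this
  rw [← hℒ]
  refine le_antisymm (le_iSup ℒ 0) (iSup_le fun i => ?_)
  rcases eq_or_ne i 0 with rfl | hi
  · exact le_rfl
  · simp [hcenter i hi]

variable {ℒ} in
theorem sub_mem_nonzeroDegreeCentralizer [SetLike.GradedBracket ℒ] (f : L →ₗ⁅R⁆ L)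
    (hf : ∀ i ≠ 0, ∀ x ∈ ℒ i, f x = x) {x : L} (hx : x ∈ ℒ 0) :
    f x - x ∈ nonzeroDegreeCentralizer ℒ := by
  intro i hi y hy
  have hxy : ⁅x, y⁆ ∈ ℒ i := by simpa using SetLike.GradedBracket.bracket_mem hx hy
  rw [sub_lie, ← hf i hi y hy, ← LieHom.map_lie, hf i hi y hy, hf i hi _ hxy, sub_self]

variable {ℒ} in
theorem IsSimple.apply_eq_self_of_forall_ne_zero [SetLike.GradedBracket ℒ] [IsSimple R L]
    (hℒ : ⨆ i, ℒ i = ⊤) (h₀ : ℒ 0 ≠ ⊤) (f : L →ₗ⁅R⁆ L) (hf : ∀ i ≠ 0, ∀ x ∈ ℒ i, f x = x)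
    (a : L) : f a = a := by
  have hf₀ : ∀ x ∈ ℒ 0, f x = x := fun x hx => by
    have : f x - x ∈ nonzeroDegreeCentralizerIdeal ℒ hℒ :=
      sub_mem_nonzeroDegreeCentralizer f hf hx
    rwa [nonzeroDegreeCentralizerIdeal_eq_bot ℒ hℒ h₀, LieSubmodule.mem_bot, sub_eq_zero] at this
  have hfix : ⨆ i, ℒ i ≤ LinearMap.eqLocus (f : L →ₗ[R] L) LinearMap.id :=
    iSup_le fun i x hx => by
      rcases eq_or_ne i 0 with rfl | hi
      exacts [hf₀ x hx, hf i hi x hx]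
  exact hfix (hℒ ▸ Submodule.mem_top)

end LieAlgebra

/-- If an automorphism of a simple ℤ-graded Lie algebra L (with L ≠ L_0)
fixes every homogeneous element of nonzero degree, then it is the identity. -/
theorem statement13
    (k : Type*) [Field k]
    (L : Type*) [LieRing L] [LieAlgebra k L] [LieAlgebra.IsSimple k L]
    (Lc : ℤ → Submodule k L)
    (hdirect : DirectSum.IsInternal Lc)
    (hbracket : ∀ i j : ℤ, ∀ x ∈ Lc i, ∀ y ∈ Lc j, ⁅x, y⁆ ∈ Lc (i + j))
    (hnontriv : Lc 0 ≠ ⊤)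
    (f : L ≃ₗ⁅k⁆ L)
    (hfix : ∀ i : ℤ, i ≠ 0 → ∀ x ∈ Lc i, f x = x) :
    ∀ a : L, f a = a := by
  have : SetLike.GradedBracket Lc := ⟨fun i j x y hx hy => hbracket i j x hx y hy⟩
  exact LieAlgebra.IsSimple.apply_eq_self_of_forall_ne_zero hdirect.submodule_iSup_eq_top hnontriv
    f.toLieHom hfix
end

section
/- Let L be a simple ℤ-graded Lie algebra over a field k with L ≠ L_0. If x ∈ L_0 satisfies ⁅x, y⁆ = 0 for every y ∈ L_i and every i ≠ 0, then x = 0. (Consequently, the natural graded homomorphism from L to the Lie algebra ↑L of the paper's Construction 2.1, which sends x ∈ L_0 to the family of restrictions (ad(x)|_{L_i})_{i≠0}, is injective.) -/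
/-- In a simple ℤ-graded Lie algebra L with L ≠ L_0, if x ∈ L_0 commutes
with every homogeneous element of nonzero degree, then x = 0. -/
theorem statement14
    (k : Type*) [Field k]
    (L : Type*) [LieRing L] [LieAlgebra k L] [LieAlgebra.IsSimple k L]
    (Lc : ℤ → Submodule k L)
    (hdirect : DirectSum.IsInternal Lc)
    (hbracket : ∀ i j : ℤ, ∀ x ∈ Lc i, ∀ y ∈ Lc j, ⁅x, y⁆ ∈ Lc (i + j))
    (hnontriv : Lc 0 ≠ ⊤) :
    ∀ x ∈ Lc 0, (∀ i : ℤ, i ≠ 0 → ∀ y ∈ Lc i, ⁅x, y⁆ = 0) → x = 0 := by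
  intro x hx0 hxc
  -- The submodule of all such elements
  set S : Submodule k L :=
    { carrier := {x | x ∈ Lc 0 ∧ ∀ i : ℤ, i ≠ 0 → ∀ y ∈ Lc i, ⁅x, y⁆ = 0}
      add_mem' := fun ha hb => ⟨(Lc 0).add_mem ha.1 hb.1, fun i hi y hy => by
        rw [add_lie, ha.2 i hi y hy, hb.2 i hi y hy, add_zero]⟩
      zero_mem' := ⟨(Lc 0).zero_mem, fun i _ y _ => zero_lie y⟩
      smul_mem' := fun c z hz => ⟨(Lc 0).smul_mem c hz.1, fun i hi y hy => by
        rw [smul_lie, hz.2 i hi y hy, smul_zero]⟩ } with hS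
  have hSmem : ∀ z : L, z ∈ S ↔
      (z ∈ Lc 0 ∧ ∀ i : ℤ, i ≠ 0 → ∀ y ∈ Lc i, ⁅z, y⁆ = 0) := fun z => Iff.rfl
  -- S is a Lie ideal
  have key : ∀ z : L, ∀ m ∈ S, ⁅z, m⁆ ∈ S := by
    intro z m hm
    have hz : z ∈ ⨆ i, Lc i := by
      rw [hdirect.submodule_iSup_eq_top]; trivial
    induction hz using Submodule.iSup_induction' with
    | mem j z hzj =>
        rcases eq_or_ne j 0 with rfl | hj
        · -- z ∈ Lc 0
          refine (hSmem _).2 ⟨?_, ?_⟩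
          · have := hbracket 0 0 z hzj m hm.1
            simpa using this
          · intro i hi y hy
            have h1 : ⁅m, y⁆ = 0 := hm.2 i hi y hy
            have h2 : ⁅z, y⁆ ∈ Lc i := by
              have := hbracket 0 i z hzj y hy; simpa using this
            have h3 : ⁅m, ⁅z, y⁆⁆ = 0 := hm.2 i hi _ h2
            rw [lie_lie, h1, lie_zero, h3, sub_zero]
        · have : ⁅z, m⁆ = -⁅m, z⁆ := by rw [lie_skew]
          rw [this, hm.2 j hj z hzj, neg_zero]
          exact S.zero_mem
    | zero => rw [zero_lie]; exact S.zero_mem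
    | add a b _ _ ha hb => rw [add_lie]; exact S.add_mem ha hb
  set I : LieIdeal k L :=
    { S with lie_mem := fun {z m} hm => key z m hm } with hI
  have hImem : ∀ z : L, z ∈ I ↔ z ∈ S := fun z => Iff.rfl
  rcases LieAlgebra.IsSimple.eq_bot_or_eq_top I with hbot | htop
  · have : x ∈ I := (hImem x).2 ((hSmem x).2 ⟨hx0, hxc⟩)
    rw [hbot] at this
    simpa using this
  · exfalso
    apply hnontriv
    rw [eq_top_iff]
    intro z _
    have : z ∈ I := htop ▸ trivial
    exact ((hSmem z).1 ((hImem z).1 this)).1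
end
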